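/- arXiv:2512.24285 — 11 statements merged into one kernel-verified Lean document; each statement's English description precedes it below -/
import Mathlib

section
/- Let B ∈ ℂ^{m×n}, W ∈ ℂ^{n×m}, let k be a natural number with k = ind(BW), let H be the Moore–Penrose inverse of B, and let X be a minimal rank W-weighted weak Drazin inverse of B. Then Y = H·B·W·X·W is the unique matrix Y ∈ ℂ^{n×m} satisfying the three equations Y·B·Y = Y, B·Y = B·W·X·W, and Y·(B·W)^{k+1} = H·(B·W)^{k+1}. -/
open Matrix

/-- The index of a square complex matrix: the least `j` with `rank (M^j) = rank (M^(j+1))`. -/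
noncomputable def matIndex {p : ℕ} (M : Matrix (Fin p) (Fin p) ℂ) : ℕ :=
  sInf {j : ℕ | (M ^ j).rank = (M ^ (j + 1)).rank}

/-- The column space of a complex matrix: the range of `v ↦ M *ᵥ v`. -/
noncomputable def colSpace {a b : ℕ} (M : Matrix (Fin a) (Fin b) ℂ) :
    Submodule ℂ (Fin a → ℂ) :=
  LinearMap.range M.mulVecLin

/-- The null space of a complex matrix: the kernel of `v ↦ M *ᵥ v`. -/
noncomputable def nullSpace {a b : ℕ} (M : Matrix (Fin a) (Fin b) ℂ) :
    Submodule ℂ (Fin b → ℂ) :=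
  LinearMap.ker M.mulVecLin

/-!
Since `X·W·(B·W)^(k+1) = (B·W)^k`, the column space of `(B·W)^k` lies in that of `X`, and the
rank condition makes them equal, so `X = (B·W)^k·U`. Then `X·W·(B·W)·X = X`, which makes
`B·W·X·W` idempotent, and `Y·(B·W)·X = Y·(B·W)^(k+1)·U` is pinned down by the third equation.
-/

namespace Matrix

variable {l m n : Type*} [Fintype m] [Fintype n]

theorem exists_eq_mul_of_range_mulVecLin_le {R : Type*} [CommSemiring R] [DecidableEq m]
    {X : Matrix l m R} {M : Matrix l n R}
    (h : LinearMap.range X.mulVecLin ≤ LinearMap.range M.mulVecLin) :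
    ∃ U : Matrix n m R, X = M * U := by
  choose u hu using fun j : m => h ⟨Pi.single j 1, rfl⟩
  refine ⟨(of u)ᵀ, ext fun i j => ?_⟩
  have hcol := congrFun (hu j) i
  simp only [mulVecLin_apply, mulVec_single_one] at hcol
  rw [← col_apply X j i, ← hcol]
  rfl

theorem exists_eq_mul_of_mul_eq_of_rank_le {K : Type*} [Field K] [DecidableEq m]
    {X : Matrix l m K} {V : Matrix m n K} {M : Matrix l n K}
    (h : X * V = M) (hrank : X.rank ≤ M.rank) : ∃ U : Matrix n m K, X = M * U := by
  have hle : LinearMap.range M.mulVecLin ≤ LinearMap.range X.mulVecLin := by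
    rw [← h, mulVecLin_mul]
    exact LinearMap.range_comp_le_range _ _
  exact exists_eq_mul_of_range_mulVecLin_le (Submodule.eq_of_le_of_finrank_le hle hrank).ge

end Matrix

theorem weighted_weak_MPD_unique_general {m n : ℕ}
    (B : Matrix (Fin m) (Fin n) ℂ) (W : Matrix (Fin n) (Fin m) ℂ)
    (k : ℕ)
    (H : Matrix (Fin n) (Fin m) ℂ)
    (hH1 : B * H * B = B)
    (X : Matrix (Fin m) (Fin n) ℂ)
    (hX1 : X * W * (B * W) ^ (k + 1) = (B * W) ^ k)
    (hX2 : X.rank = ((B * W) ^ k).rank) :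
    ∀ Y : Matrix (Fin n) (Fin m) ℂ,
      (Y * B * Y = Y ∧ B * Y = B * W * X * W ∧
        Y * (B * W) ^ (k + 1) = H * (B * W) ^ (k + 1)) ↔
      Y = H * B * W * X * W := by
  have hXV : X * (W * (B * W) ^ (k + 1)) = (B * W) ^ k := by rw [← Matrix.mul_assoc, hX1]
  obtain ⟨U, hXU⟩ := exists_eq_mul_of_mul_eq_of_rank_le hXV hX2.le
  have hBWX : B * W * X = (B * W) ^ (k + 1) * U := by
    rw [hXU, pow_succ']; simp only [Matrix.mul_assoc]
  have hXWBWX : X * W * (B * W) * X = X := by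
    rw [Matrix.mul_assoc _ _ X, hBWX, ← Matrix.mul_assoc, hX1, hXU]
  have hBY : B * (H * B * W * X * W) = B * W * X * W := by
    simp only [← Matrix.mul_assoc, hH1]
  intro Y
  constructor
  · rintro ⟨hYBY, hBYeq, hYBW⟩
    calc Y = Y * B * Y := hYBY.symm
      _ = Y * (B * W * X) * W := by rw [Matrix.mul_assoc Y, hBYeq]; simp only [Matrix.mul_assoc]
      _ = H * (B * W * X) * W := by
        rw [hBWX, ← Matrix.mul_assoc, hYBW]; simp only [Matrix.mul_assoc]
      _ = H * B * W * X * W := by simp only [Matrix.mul_assoc]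
  · rintro rfl
    refine ⟨?_, hBY, ?_⟩
    · calc H * B * W * X * W * B * (H * B * W * X * W)
          = H * B * W * (X * W * (B * W) * X) * W := by
            rw [Matrix.mul_assoc _ B, hBY]; simp only [Matrix.mul_assoc]
        _ = H * B * W * X * W := by rw [hXWBWX]
    · calc H * B * W * X * W * (B * W) ^ (k + 1) = H * (B * W) * (X * W * (B * W) ^ (k + 1)) := by
            simp only [Matrix.mul_assoc]
        _ = H * (B * W) ^ (k + 1) := by rw [hX1, Matrix.mul_assoc, ← pow_succ']

/-- **Theorem 3.1.** `Y = H·B·W·X·W` is the unique solution of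
`Y·B·Y = Y`, `B·Y = B·W·X·W`, `Y·(B·W)^(k+1) = H·(B·W)^(k+1)`. -/
theorem weighted_weak_MPD_unique {m n : ℕ}
    (B : Matrix (Fin m) (Fin n) ℂ) (W : Matrix (Fin n) (Fin m) ℂ)
    (k : ℕ) (hk : k = matIndex (B * W))
    (H : Matrix (Fin n) (Fin m) ℂ)
    (hH1 : B * H * B = B) (hH2 : H * B * H = H)
    (hH3 : (B * H)ᴴ = B * H) (hH4 : (H * B)ᴴ = H * B)
    (X : Matrix (Fin m) (Fin n) ℂ)
    (hX1 : X * W * (B * W) ^ (k + 1) = (B * W) ^ k)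
    (hX2 : X.rank = ((B * W) ^ k).rank) :
    ∀ Y : Matrix (Fin n) (Fin m) ℂ,
      (Y * B * Y = Y ∧ B * Y = B * W * X * W ∧
        Y * (B * W) ^ (k + 1) = H * (B * W) ^ (k + 1)) ↔
      Y = H * B * W * X * W :=
  weighted_weak_MPD_unique_general B W k H hH1 X hX1 hX2
end

section
/- Let B ∈ ℂ^{m×n}, W ∈ ℂ^{n×m}, let k be a natural number with k = ind(BW), let H be the Moore–Penrose inverse of B, let X be a minimal rank W-weighted weak Drazin inverse of B, and let Y ∈ ℂ^{n×m}. Then the following are equivalent: (i) Y = H·B·W·X·W; (ii) Y·B·Y = Y, B·Y·B = B·W·X·W·B, B·Y = B·W·X·W and Y·(B·W)^{k+1} = H·(B·W)^{k+1}; (iii) Y·B·Y = Y, B·Y = B·W·X·W and Y·B = H·B·Y·B; (iv) B·Y = B·W·X·W, Y·B = H·B·Y·B and Y = H·B·Y; (v) Y·B·Y = Y, B·Y = B·W·X·W, Y·(B·W)^{k+1} = H·(B·W)^{k+1} and Y·X = H·X; (vi) Y = H·B·Y, B·Y = B·W·X·W and Y·X·H = H·X·H; (vii) Y = H·B·Y,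 B·Y = B·W·X·W and Y·X·B = H·X·B. -/
open Matrix

/-- If the range (column space) of `N` is contained in that of `M`, then `N = M * C`. -/
lemma exists_right_factor {a b c : ℕ} (M : Matrix (Fin a) (Fin b) ℂ)
    (N : Matrix (Fin a) (Fin c) ℂ)
    (h : LinearMap.range N.mulVecLin ≤ LinearMap.range M.mulVecLin) :
    ∃ C : Matrix (Fin b) (Fin c) ℂ, M * C = N := by
  have hmem : ∀ j : Fin c, (fun i => N i j) ∈ LinearMap.range M.mulVecLin := by
    intro j
    have h0 : N.mulVecLin (Pi.single j 1) ∈ LinearMap.range N.mulVecLin :=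
      LinearMap.mem_range_self _ _
    have hval : N.mulVecLin (Pi.single j 1) = fun i => N i j := by
      simp [Matrix.mulVecLin_apply]; rfl
    exact hval ▸ h h0
  choose v hv using hmem
  refine ⟨Matrix.of fun i j => v j i, ?_⟩
  ext i j
  have := congrFun (hv j) i
  simpa [Matrix.mul_apply, Matrix.mulVecLin_apply, Matrix.mulVec, dotProduct] using this

lemma range_mul_le {a b c : ℕ} (M : Matrix (Fin a) (Fin b) ℂ) (N : Matrix (Fin b) (Fin c) ℂ) :
    LinearMap.range (M * N).mulVecLin ≤ LinearMap.range M.mulVecLin := by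
  rw [Matrix.mulVecLin_mul]
  exact LinearMap.range_comp_le_range _ _

/-- Ranks of powers stabilize at some point. -/
lemma exists_rank_pow_eq {p : ℕ} (A : Matrix (Fin p) (Fin p) ℂ) :
    ∃ j, (A ^ j).rank = (A ^ (j + 1)).rank := by
  by_contra hcon
  push_neg at hcon
  have hlt : ∀ j, (A ^ (j + 1)).rank < (A ^ j).rank := by
    intro j
    refine lt_of_le_of_ne ?_ fun h => hcon j h.symm
    rw [pow_succ A j]
    exact Matrix.rank_mul_le_left _ _
  have key : ∀ nn : ℕ, (A ^ nn).rank + nn ≤ (A ^ 0).rank := by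
    intro nn
    induction nn with
    | zero => simp
    | succ t ih =>
      have := hlt t
      omega
  have := key ((A ^ 0).rank + 1)
  omega

set_option maxHeartbeats 1000000 in
/-- **Theorem 3.3.** Characterizations of the W-weighted weak MPD inverse `H·B·W·X·W`.
(In item (vii), the paper's ill-typed product `Y·X·B` is rendered as `Y·X·W·B`,
which restores the intended unweighted meaning `Y·X·B` when `W = I`.) -/
theorem weighted_weak_MPD_characterizations {m n : ℕ}
    (B : Matrix (Fin m) (Fin n) ℂ) (W : Matrix (Fin n) (Fin m) ℂ)
    (k : ℕ) (hk : k = matIndex (B * W))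
    (H : Matrix (Fin n) (Fin m) ℂ)
    (hH1 : B * H * B = B) (hH2 : H * B * H = H)
    (hH3 : (B * H)ᴴ = B * H) (hH4 : (H * B)ᴴ = H * B)
    (X : Matrix (Fin m) (Fin n) ℂ)
    (hX1 : X * W * (B * W) ^ (k + 1) = (B * W) ^ k)
    (hX2 : X.rank = ((B * W) ^ k).rank)
    (Y : Matrix (Fin n) (Fin m) ℂ) :
    [ Y = H * B * W * X * W,
      Y * B * Y = Y ∧ B * Y * B = B * W * X * W * B ∧ B * Y = B * W * X * W ∧
        Y * (B * W) ^ (k + 1) = H * (B * W) ^ (k + 1),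
      Y * B * Y = Y ∧ B * Y = B * W * X * W ∧ Y * B = H * B * Y * B,
      B * Y = B * W * X * W ∧ Y * B = H * B * Y * B ∧ Y = H * B * Y,
      Y * B * Y = Y ∧ B * Y = B * W * X * W ∧
        Y * (B * W) ^ (k + 1) = H * (B * W) ^ (k + 1) ∧ Y * X = H * X,
      Y = H * B * Y ∧ B * Y = B * W * X * W ∧ Y * X * H = H * X * H,
      Y = H * B * Y ∧ B * Y = B * W * X * W ∧ Y * X * W * B = H * X * W * B ].TFAE := by
  -- k is the index, so rank ((BW)^k) = rank ((BW)^(k+1))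
  have hrk : ((B * W) ^ k).rank = ((B * W) ^ (k + 1)).rank := by
    have hne : {j : ℕ | ((B * W) ^ j).rank = ((B * W) ^ (j + 1)).rank}.Nonempty :=
      exists_rank_pow_eq (B * W)
    have := Nat.sInf_mem hne
    rwa [hk, matIndex]
  -- obtain D with (BW)^(k+1) * D = (BW)^k
  obtain ⟨D, hD⟩ : ∃ D : Matrix (Fin m) (Fin m) ℂ, (B * W) ^ (k + 1) * D = (B * W) ^ k := by
    apply exists_right_factor
    have hle : LinearMap.range ((B * W) ^ (k + 1)).mulVecLin ≤
        LinearMap.range ((B * W) ^ k).mulVecLin := by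
      rw [pow_succ (B * W) k]; exact range_mul_le _ _
    exact (Submodule.eq_of_le_of_finrank_eq hle hrk.symm).ge
  -- obtain C with (BW)^k * C = X
  obtain ⟨C, hC⟩ : ∃ C : Matrix (Fin m) (Fin n) ℂ, (B * W) ^ k * C = X := by
    apply exists_right_factor
    have hle : LinearMap.range ((B * W) ^ k).mulVecLin ≤ LinearMap.range X.mulVecLin := by
      have hfac : (B * W) ^ k = X * (W * (B * W) ^ (k + 1)) := by
        rw [← Matrix.mul_assoc]; exact hX1.symm
      rw [hfac]; exact range_mul_le _ _
    exact (Submodule.eq_of_le_of_finrank_eq hle hX2.symm).ge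
  have hpow : (B * W) ^ (k + 1) = (B * W) * (B * W) ^ k := pow_succ' (B * W) k
  -- X * W * (B*W) * X = X
  have h1 : X * W * (B * W) * X = X := by
    calc X * W * (B * W) * X = X * W * (B * W) * ((B * W) ^ k * C) := by rw [hC]
      _ = X * W * ((B * W) * (B * W) ^ k) * C := by simp only [Matrix.mul_assoc]
      _ = X * W * (B * W) ^ (k + 1) * C := by rw [← hpow]
      _ = (B * W) ^ k * C := by rw [hX1]
      _ = X := hC
  -- P := B*W*X*W is idempotent
  have hPP : B * W * X * W * (B * W * X * W) = B * W * X * W := by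
    calc B * W * X * W * (B * W * X * W)
        = B * W * (X * W * (B * W) * X) * W := by simp only [Matrix.mul_assoc]
      _ = B * W * X * W := by rw [h1]
  have hPA : B * W * X * W * (B * W) ^ (k + 1) = (B * W) ^ (k + 1) := by
    calc B * W * X * W * (B * W) ^ (k + 1)
        = B * W * (X * W * (B * W) ^ (k + 1)) := by simp only [Matrix.mul_assoc]
      _ = B * W * (B * W) ^ k := by rw [hX1]
      _ = (B * W) ^ (k + 1) := hpow.symm
  have hPAk : B * W * X * W * (B * W) ^ k = (B * W) ^ k := by
    calc B * W * X * W * (B * W) ^ k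
        = B * W * X * W * ((B * W) ^ (k + 1) * D) := by rw [hD]
      _ = B * W * X * W * (B * W) ^ (k + 1) * D := by simp only [Matrix.mul_assoc]
      _ = (B * W) ^ (k + 1) * D := by rw [hPA]
      _ = (B * W) ^ k := hD
  have hPX : B * W * X * W * X = X := by
    calc B * W * X * W * X
        = B * W * X * W * ((B * W) ^ k * C) := by rw [hC]
      _ = B * W * X * W * (B * W) ^ k * C := by simp only [Matrix.mul_assoc]
      _ = (B * W) ^ k * C := by rw [hPAk]
      _ = X := hC
  have hPfac : B * W * X * W = (B * W) ^ (k + 1) * (C * W) := by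
    calc B * W * X * W = B * W * ((B * W) ^ k * C) * W := by rw [hC]
      _ = (B * W) * (B * W) ^ k * (C * W) := by simp only [Matrix.mul_assoc]
      _ = (B * W) ^ (k + 1) * (C * W) := by rw [← hpow]
  have hBY0 : B * (H * B * W * X * W) = B * W * X * W := by
    calc B * (H * B * W * X * W) = B * H * B * (W * X * W) := by simp only [Matrix.mul_assoc]
      _ = B * (W * X * W) := by rw [hH1]
      _ = B * W * X * W := by simp only [Matrix.mul_assoc]
  have hHBY0 : H * B * (H * B * W * X * W) = H * B * W * X * W := by
    calc H * B * (H * B * W * X * W) = H * B * H * (B * W * X * W) := by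
          simp only [Matrix.mul_assoc]
      _ = H * (B * W * X * W) := by rw [hH2]
      _ = H * B * W * X * W := by simp only [Matrix.mul_assoc]
  have hY0BY0 : H * B * W * X * W * B * (H * B * W * X * W) = H * B * W * X * W := by
    calc H * B * W * X * W * B * (H * B * W * X * W)
        = H * (B * W * X * W * (B * (H * B * W * X * W))) := by simp only [Matrix.mul_assoc]
      _ = H * (B * W * X * W * (B * W * X * W)) := by rw [hBY0]
      _ = H * (B * W * X * W) := by rw [hPP]
      _ = H * B * W * X * W := by simp only [Matrix.mul_assoc]
  have hY0X : H * B * W * X * W * X = H * X := by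
    calc H * B * W * X * W * X = H * (B * W * X * W * X) := by simp only [Matrix.mul_assoc]
      _ = H * X := by rw [hPX]
  have hY0pow : H * B * W * X * W * (B * W) ^ (k + 1) = H * (B * W) ^ (k + 1) := by
    calc H * B * W * X * W * (B * W) ^ (k + 1)
        = H * (B * W * X * W * (B * W) ^ (k + 1)) := by simp only [Matrix.mul_assoc]
      _ = H * (B * W) ^ (k + 1) := by rw [hPA]
  -- shared converse arguments
  have himpA : B * Y = B * W * X * W → Y = H * B * Y → Y = H * B * W * X * W := by
    intro h1' h2'
    calc Y = H * B * Y := h2'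
      _ = H * (B * Y) := by simp only [Matrix.mul_assoc]
      _ = H * (B * W * X * W) := by rw [h1']
      _ = H * B * W * X * W := by simp only [Matrix.mul_assoc]
  have himpB : Y * B * Y = Y → B * Y = B * W * X * W →
      Y * (B * W) ^ (k + 1) = H * (B * W) ^ (k + 1) → Y = H * B * W * X * W := by
    intro h1' h2' h3'
    calc Y = Y * B * Y := h1'.symm
      _ = Y * (B * Y) := by simp only [Matrix.mul_assoc]
      _ = Y * (B * W * X * W) := by rw [h2']
      _ = Y * ((B * W) ^ (k + 1) * (C * W)) := by rw [hPfac]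
      _ = Y * (B * W) ^ (k + 1) * (C * W) := by simp only [Matrix.mul_assoc]
      _ = H * (B * W) ^ (k + 1) * (C * W) := by rw [h3']
      _ = H * ((B * W) ^ (k + 1) * (C * W)) := by simp only [Matrix.mul_assoc]
      _ = H * (B * W * X * W) := by rw [← hPfac]
      _ = H * B * W * X * W := by simp only [Matrix.mul_assoc]
  tfae_have 1 → 2 := by
    rintro rfl
    exact ⟨hY0BY0, by rw [hBY0], hBY0, hY0pow⟩
  tfae_have 2 → 1 := by
    rintro ⟨h1', _, h3', h4'⟩
    exact himpB h1' h3' h4'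
  tfae_have 1 → 3 := by
    rintro rfl
    exact ⟨hY0BY0, hBY0, by rw [hHBY0]⟩
  tfae_have 3 → 1 := by
    rintro ⟨h1', h2', h3'⟩
    refine himpA h2' ?_
    calc Y = Y * B * Y := h1'.symm
      _ = H * B * Y * B * Y := by rw [h3']
      _ = H * B * (Y * B * Y) := by simp only [Matrix.mul_assoc]
      _ = H * B * Y := by rw [h1']
  tfae_have 1 → 4 := by
    rintro rfl
    exact ⟨hBY0, by rw [hHBY0], hHBY0.symm⟩
  tfae_have 4 → 1 := by
    rintro ⟨h1', _, h3'⟩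
    exact himpA h1' h3'
  tfae_have 1 → 5 := by
    rintro rfl
    exact ⟨hY0BY0, hBY0, hY0pow, hY0X⟩
  tfae_have 5 → 1 := by
    rintro ⟨h1', h2', h3', _⟩
    exact himpB h1' h2' h3'
  tfae_have 1 → 6 := by
    rintro rfl
    refine ⟨hHBY0.symm, hBY0, ?_⟩
    calc H * B * W * X * W * X * H = H * B * W * X * W * X * H := rfl
      _ = H * X * H := by rw [hY0X]
  tfae_have 6 → 1 := by
    rintro ⟨h1', h2', _⟩
    exact himpA h2' h1'
  tfae_have 1 → 7 := by
    rintro rfl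
    refine ⟨hHBY0.symm, hBY0, ?_⟩
    calc H * B * W * X * W * X * W * B
        = H * B * W * X * W * X * (W * B) := by simp only [Matrix.mul_assoc]
      _ = H * X * (W * B) := by rw [hY0X]
      _ = H * X * W * B := by simp only [Matrix.mul_assoc]
  tfae_have 7 → 1 := by
    rintro ⟨h1', h2', _⟩
    exact himpA h2' h1'
  tfae_finish
end

section
/- Let B ∈ ℂ^{m×n}, W ∈ ℂ^{n×m}, let k be a natural number with k = ind(WB), let H be the Moore–Penrose inverse of B, let Z be a minimal rank W-weighted right weak Drazin inverse of B, and let Y₁ ∈ ℂ^{n×m}. Then the following are equivalent: (i) Y₁ = W·Z·W·B·H; (ii) Y₁·B·Y₁ = Y₁, B·Y₁·B = B·W·Z·W·B, Y₁·B = W·Z·W·B and (W·B)^{k+1}·Y₁ = (W·B)^{k+1}·H; (iii) Y₁·B·Y₁ = Y₁, Y₁·B = W·Z·W·B and B·Y₁ = B·Y₁·B·H; (iv) Y₁·B = W·Z·W·B, B·Y₁ = B·Y₁·B·H and Y₁ = Y₁·B·H; (v) Y₁·B·Y₁ = Y₁, Y₁·B = W·Z·W·B, (W·B)^{k+1}·Y₁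 = (W·B)^{k+1}·H and Z·Y₁ = Z·H; (vi) Y₁ = Y₁·B·H, Y₁·B = W·Z·W·B and H·Z·Y₁ = H·Z·H. -/
/-!
Write `A = W * B` and `G = W * Z * W`. Since `k` is the index of `A`, `A ^ k` and `A ^ (k + 1)`
have the same kernel; since `A ^ k = W * (B * W) ^ (k + 1) * Z` and `rank Z = rank (A ^ k)`, so
do `Z` and `A ^ k`. Hence `A ^ (k + 1) * X = A ^ (k + 1) * X'` forces `Z * X = Z * X'`. This makes
`G` an outer inverse of `B` (`G * B * G = G`) and turns the condition
`A ^ (k + 1) * Y = A ^ (k + 1) * H` into `G * B * Y = G * B * H`. From `B * H * B = B`, the matrix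
`G * B * H` satisfies `(G * B * H) * B = G * B`, and each list of conditions, which always
contains `Y * B = G * B`, pins `Y` down to `G * B * H`.
-/

open Matrix

theorem rank_pow_matIndex {p : ℕ} (A : Matrix (Fin p) (Fin p) ℂ) :
    (A ^ matIndex A).rank = (A ^ (matIndex A + 1)).rank := by
  refine Nat.sInf_mem (s := {j : ℕ | (A ^ j).rank = (A ^ (j + 1)).rank}) ?_
  -- the set is nonempty because the ranks of the powers cannot decrease forever
  obtain ⟨j, hj⟩ := WellFounded.not_rel_apply_succ (r := (· < ·)) fun j ↦ (A ^ j).rank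
  exact ⟨j, le_antisymm (not_lt.1 hj) (by rw [pow_succ]; exact rank_mul_le_left _ _)⟩

theorem Matrix.mul_eq_zero_of_eq_mul_of_rank_le {K l m n p : Type*} [Field K] [Fintype l]
    [Fintype m] [Fintype n] [Fintype p] {M : Matrix l m K} {N : Matrix n m K} {P : Matrix l n K}
    (hM : M = P * N) (hr : N.rank ≤ M.rank) {X : Matrix m p K} (hX : M * X = 0) :
    N * X = 0 := by
  classical
  have hker : LinearMap.ker N.mulVecLin = LinearMap.ker M.mulVecLin := by
    refine Submodule.eq_of_le_of_finrank_le ?_ ?_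
    · rw [hM, mulVecLin_mul]
      exact LinearMap.ker_le_ker_comp _ _
    have hN := LinearMap.finrank_range_add_finrank_ker N.mulVecLin
    have hM := LinearMap.finrank_range_add_finrank_ker M.mulVecLin
    rw [← rank] at hN hM
    omega
  apply Matrix.toLin'.injective
  rw [map_zero, toLin'_apply', mulVecLin_mul, ← LinearMap.range_le_ker_iff, hker,
    LinearMap.range_le_ker_iff, ← mulVecLin_mul, hX, mulVecLin_zero]

theorem Matrix.mul_pow_mul {R m n : Type*} [Semiring R] [Fintype m] [Fintype n]
    [DecidableEq m] [DecidableEq n] (W : Matrix n m R) (B : Matrix m n R) (j : ℕ) :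
    (W * B) ^ j * W = W * (B * W) ^ j := by
  induction j with
  | zero => simp
  | succ j ih => simp only [pow_succ, ← Matrix.mul_assoc, ← ih]

theorem Matrix.eq_mul_mul_of_mul_mul_self_eq {R m n : Type*} [Semiring R] [Fintype m]
    [Fintype n] {B : Matrix m n R} {G H Y : Matrix n m R} (hG : G * B * G = G)
    (hYBY : Y * B * Y = Y) (hYB : Y * B = G * B) (hBY : B * Y = B * Y * B * H) :
    Y = G * B * H :=
  calc Y = G * (B * Y) := by rw [← Matrix.mul_assoc, ← hYB, hYBY]
    _ = G * B * G * B * H := by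
      rw [hBY, Matrix.mul_assoc B, hYB]
      simp only [Matrix.mul_assoc]
    _ = G * B * H := by rw [hG]

section WeightedWeakDrazin

variable {K m n : Type*} [Field K] [Fintype m] [Fintype n] [DecidableEq m] [DecidableEq n]
  {B : Matrix m n K} {W : Matrix n m K} {Z : Matrix m n K} {k : ℕ}

theorem pow_succ_mul_mul_eq_pow (hZ1 : W * (B * W) ^ (k + 1) * Z = (W * B) ^ k) :
    (W * B) ^ (k + 1) * (W * Z) = (W * B) ^ k := by
  rw [← Matrix.mul_assoc, Matrix.mul_pow_mul, hZ1]

theorem pow_succ_mul_weightedWeakDMP (hZ1 : W * (B * W) ^ (k + 1) * Z = (W * B) ^ k)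
    (H : Matrix n m K) : (W * B) ^ (k + 1) * (W * Z * W * B * H) = (W * B) ^ (k + 1) * H :=
  calc (W * B) ^ (k + 1) * (W * Z * W * B * H) = (W * B) ^ (k + 1) * (W * Z) * (W * B) * H := by
        simp only [Matrix.mul_assoc]
    _ = (W * B) ^ (k + 1) * H := by rw [pow_succ_mul_mul_eq_pow hZ1, ← pow_succ]

theorem mul_eq_mul_of_pow_succ_mul_eq (hZ1 : W * (B * W) ^ (k + 1) * Z = (W * B) ^ k)
    (hZ2 : Z.rank = ((W * B) ^ k).rank) (hrk : ((W * B) ^ k).rank = ((W * B) ^ (k + 1)).rank)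
    {p : Type*} [Fintype p] {X X' : Matrix n p K}
    (h : (W * B) ^ (k + 1) * X = (W * B) ^ (k + 1) * X') : Z * X = Z * X' := by
  rw [← sub_eq_zero, ← Matrix.mul_sub] at h ⊢
  have hk : (W * B) ^ k * (X - X') = 0 :=
    mul_eq_zero_of_eq_mul_of_rank_le (pow_succ' _ _) hrk.le h
  exact mul_eq_zero_of_eq_mul_of_rank_le hZ1.symm hZ2.le hk

theorem weightedWeakDrazin_outerInverse (hZ1 : W * (B * W) ^ (k + 1) * Z = (W * B) ^ k)
    (hZ2 : Z.rank = ((W * B) ^ k).rank) (hrk : ((W * B) ^ k).rank = ((W * B) ^ (k + 1)).rank) :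
    W * Z * W * B * (W * Z * W) = W * Z * W := by
  have h : Z * (W * B * (W * Z)) = Z * (1 : Matrix n n K) := by
    refine mul_eq_mul_of_pow_succ_mul_eq hZ1 hZ2 hrk ?_
    rw [← Matrix.mul_assoc, ← pow_succ, pow_succ', Matrix.mul_assoc,
      pow_succ_mul_mul_eq_pow hZ1, ← pow_succ', Matrix.mul_one]
  calc W * Z * W * B * (W * Z * W) = W * (Z * (W * B * (W * Z))) * W := by
        simp only [Matrix.mul_assoc]
    _ = W * Z * W := by rw [h, Matrix.mul_one]

theorem mul_mul_mul_mul_eq_of_pow_succ_mul_eq (hZ1 : W * (B * W) ^ (k + 1) * Z = (W * B) ^ k)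
    (hZ2 : Z.rank = ((W * B) ^ k).rank) (hrk : ((W * B) ^ k).rank = ((W * B) ^ (k + 1)).rank)
    {Y H : Matrix n m K} (h : (W * B) ^ (k + 1) * Y = (W * B) ^ (k + 1) * H) :
    W * Z * W * B * Y = W * Z * W * B * H := by
  have hZ : Z * (W * B * Y) = Z * (W * B * H) := by
    refine mul_eq_mul_of_pow_succ_mul_eq hZ1 hZ2 hrk ?_
    rw [← Matrix.mul_assoc, ← pow_succ, pow_succ', Matrix.mul_assoc, h, ← Matrix.mul_assoc,
      ← pow_succ', pow_succ, Matrix.mul_assoc]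
  simp only [Matrix.mul_assoc] at hZ ⊢
  rw [hZ]

end WeightedWeakDrazin

theorem weighted_weak_DMP_characterizations_general {m n : ℕ}
    (B : Matrix (Fin m) (Fin n) ℂ) (W : Matrix (Fin n) (Fin m) ℂ)
    (k : ℕ) (hk : k = matIndex (W * B))
    (H : Matrix (Fin n) (Fin m) ℂ)
    (hH1 : B * H * B = B)
    (Z : Matrix (Fin m) (Fin n) ℂ)
    (hZ1 : W * (B * W) ^ (k + 1) * Z = (W * B) ^ k)
    (hZ2 : Z.rank = ((W * B) ^ k).rank)
    (Y₁ : Matrix (Fin n) (Fin m) ℂ) :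
    [ Y₁ = W * Z * W * B * H,
      Y₁ * B * Y₁ = Y₁ ∧ B * Y₁ * B = B * W * Z * W * B ∧ Y₁ * B = W * Z * W * B ∧
        (W * B) ^ (k + 1) * Y₁ = (W * B) ^ (k + 1) * H,
      Y₁ * B * Y₁ = Y₁ ∧ Y₁ * B = W * Z * W * B ∧ B * Y₁ = B * Y₁ * B * H,
      Y₁ * B = W * Z * W * B ∧ B * Y₁ = B * Y₁ * B * H ∧ Y₁ = Y₁ * B * H,
      Y₁ * B * Y₁ = Y₁ ∧ Y₁ * B = W * Z * W * B ∧
        (W * B) ^ (k + 1) * Y₁ = (W * B) ^ (k + 1) * H ∧ Z * Y₁ = Z * H,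
      Y₁ = Y₁ * B * H ∧ Y₁ * B = W * Z * W * B ∧ H * Z * Y₁ = H * Z * H ].TFAE := by
  have hrk : ((W * B) ^ k).rank = ((W * B) ^ (k + 1)).rank := hk ▸ rank_pow_matIndex (W * B)
  have hpow := pow_succ_mul_weightedWeakDMP hZ1 H
  have hZY : Z * (W * Z * W * B * H) = Z * H := mul_eq_mul_of_pow_succ_mul_eq hZ1 hZ2 hrk hpow
  have hGBY := mul_mul_mul_mul_eq_of_pow_succ_mul_eq hZ1 hZ2 hrk (Y := Y₁) (H := H)
  have hBGB : B * W * Z * W * B = B * (W * Z * W) * B := by simp only [Matrix.mul_assoc]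
  have hG := weightedWeakDrazin_outerInverse hZ1 hZ2 hrk
  set G := W * Z * W
  have hYB : G * B * H * B = G * B := by
    rw [Matrix.mul_assoc, Matrix.mul_assoc, ← Matrix.mul_assoc B, hH1]
  have hYBY : G * B * H * B * (G * B * H) = G * B * H := by
    rw [hYB, ← Matrix.mul_assoc, ← Matrix.mul_assoc, hG]
  have hBY : B * (G * B * H) = B * (G * B * H) * B * H := by
    rw [Matrix.mul_assoc B _ B, hYB, ← Matrix.mul_assoc]
  tfae_have 1 → 2 := by
    rintro rfl
    exact ⟨hYBY, by rw [Matrix.mul_assoc B _ B, hYB, hBGB, ← Matrix.mul_assoc], hYB, hpow⟩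
  tfae_have 2 → 1 := fun ⟨hYBY, _, hYB, hY⟩ ↦ by rw [← hYBY, hYB, hGBY hY]
  tfae_have 1 → 3 := by rintro rfl; exact ⟨hYBY, hYB, hBY⟩
  tfae_have 3 → 1 := fun ⟨hYBY, hYB, hBY⟩ ↦ eq_mul_mul_of_mul_mul_self_eq hG hYBY hYB hBY
  tfae_have 1 → 4 := by rintro rfl; exact ⟨hYB, hBY, by rw [hYB]⟩
  tfae_have 4 → 1 := fun ⟨hYB, _, hY⟩ ↦ by rw [hY, hYB]
  tfae_have 1 → 5 := by rintro rfl; exact ⟨hYBY, hYB, hpow, hZY⟩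
  tfae_have 5 → 1 := fun ⟨hYBY, hYB, hY, _⟩ ↦ by rw [← hYBY, hYB, hGBY hY]
  tfae_have 1 → 6 := by
    rintro rfl
    exact ⟨by rw [hYB], hYB, by rw [Matrix.mul_assoc, hZY, ← Matrix.mul_assoc]⟩
  tfae_have 6 → 1 := fun ⟨hY, hYB, _⟩ ↦ by rw [hY, hYB]
  tfae_finish

/-- **Theorem 3.4.** Characterizations of the W-weighted weak DMP inverse `W·Z·W·B·H`. -/
theorem weighted_weak_DMP_characterizations {m n : ℕ}
    (B : Matrix (Fin m) (Fin n) ℂ) (W : Matrix (Fin n) (Fin m) ℂ)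
    (k : ℕ) (hk : k = matIndex (W * B))
    (H : Matrix (Fin n) (Fin m) ℂ)
    (hH1 : B * H * B = B) (hH2 : H * B * H = H)
    (hH3 : (B * H)ᴴ = B * H) (hH4 : (H * B)ᴴ = H * B)
    (Z : Matrix (Fin m) (Fin n) ℂ)
    (hZ1 : W * (B * W) ^ (k + 1) * Z = (W * B) ^ k)
    (hZ2 : Z.rank = ((W * B) ^ k).rank)
    (Y₁ : Matrix (Fin n) (Fin m) ℂ) :
    [ Y₁ = W * Z * W * B * H,
      Y₁ * B * Y₁ = Y₁ ∧ B * Y₁ * B = B * W * Z * W * B ∧ Y₁ * B = W * Z * W * B ∧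
        (W * B) ^ (k + 1) * Y₁ = (W * B) ^ (k + 1) * H,
      Y₁ * B * Y₁ = Y₁ ∧ Y₁ * B = W * Z * W * B ∧ B * Y₁ = B * Y₁ * B * H,
      Y₁ * B = W * Z * W * B ∧ B * Y₁ = B * Y₁ * B * H ∧ Y₁ = Y₁ * B * H,
      Y₁ * B * Y₁ = Y₁ ∧ Y₁ * B = W * Z * W * B ∧
        (W * B) ^ (k + 1) * Y₁ = (W * B) ^ (k + 1) * H ∧ Z * Y₁ = Z * H,
      Y₁ = Y₁ * B * H ∧ Y₁ * B = W * Z * W * B ∧ H * Z * Y₁ = H * Z * H ].TFAE :=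
  weighted_weak_DMP_characterizations_general B W k hk H hH1 Z hZ1 hZ2 Y₁
end

section
/- Let B ∈ ℂ^{m×n}, W ∈ ℂ^{n×m}, let k be a natural number with k = ind(BW), let H be the Moore–Penrose inverse of B, let X be a minimal rank W-weighted weak Drazin inverse of B, and set Y = H·B·W·X·W. Then: (i) B·Y is idempotent with col(B·Y) = col((B·W)^k) and N(B·Y) = N(X·W); (ii) Y·B is idempotent with col(Y·B) = col(H·(B·W)^{k+1}) and N(Y·B) = N(X·W·B); (iii) Y·B·Y = Y, col(Y) = col(H·(B·W)^{k+1}) and N(Y) = N(X·W). -/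
/-!
Write `A = B W` and `G = X W`. The rank condition on `X` together with `G A^{k+1} = A^k` forces
`col G = col A^k`, and then `G A G = G`. Since `B H B = B`, this turns `Y = H A G` into an outer
inverse of `B` (`Y B Y = Y`) with `G B Y = G`; all three projection statements follow from these
two identities, the column spaces being computed by pushing `col A^k = col A^{k+1}` (the index
condition) through left multiplications.
-/

open Matrix

section Spaces

variable {a b c : ℕ}

lemma colSpace_mul (M : Matrix (Fin a) (Fin b) ℂ) (N : Matrix (Fin b) (Fin c) ℂ) :
    colSpace (M * N) = (colSpace N).map M.mulVecLin := by
  rw [colSpace, colSpace, mulVecLin_mul, LinearMap.range_comp]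

lemma colSpace_mul_le (M : Matrix (Fin a) (Fin b) ℂ) (N : Matrix (Fin b) (Fin c) ℂ) :
    colSpace (M * N) ≤ colSpace M := by
  rw [colSpace, colSpace, mulVecLin_mul]
  exact LinearMap.range_comp_le_range _ _

lemma nullSpace_le_nullSpace_mul (M : Matrix (Fin a) (Fin b) ℂ) (N : Matrix (Fin b) (Fin c) ℂ) :
    nullSpace N ≤ nullSpace (M * N) := by
  rw [nullSpace, nullSpace, mulVecLin_mul]
  exact LinearMap.ker_le_ker_comp _ _

lemma nullSpace_eq_of_eq_mul_of_eq_mul {M : Matrix (Fin a) (Fin c) ℂ}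
    {N : Matrix (Fin b) (Fin c) ℂ} {P : Matrix (Fin a) (Fin b) ℂ} {Q : Matrix (Fin b) (Fin a) ℂ}
    (hM : M = P * N) (hN : N = Q * M) : nullSpace M = nullSpace N :=
  le_antisymm (hN ▸ nullSpace_le_nullSpace_mul Q M) (hM ▸ nullSpace_le_nullSpace_mul P N)

lemma colSpace_eq_of_le_of_rank_le {M : Matrix (Fin a) (Fin b) ℂ} {N : Matrix (Fin a) (Fin c) ℂ}
    (h : colSpace M ≤ colSpace N) (hr : N.rank ≤ M.rank) : colSpace M = colSpace N :=
  Submodule.eq_of_le_of_finrank_le h hr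

lemma mul_mul_self_eq_self_of_colSpace_le {G : Matrix (Fin a) (Fin b) ℂ}
    {A : Matrix (Fin b) (Fin a) ℂ} {P : Matrix (Fin a) (Fin c) ℂ}
    (hcol : colSpace G ≤ colSpace P) (hP : G * A * P = P) : G * A * G = G := by
  refine mulVec_injective (funext fun v => ?_)
  obtain ⟨u, hu⟩ : G *ᵥ v ∈ colSpace P := hcol ⟨v, rfl⟩
  rw [mulVecLin_apply] at hu
  rw [← mulVec_mulVec, ← hu, mulVec_mulVec, hP]

end Spaces

section OuterInverse

variable {a b : ℕ} {B : Matrix (Fin a) (Fin b) ℂ} {Y : Matrix (Fin b) (Fin a) ℂ}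

lemma isIdempotentElem_mul_of_mul_mul_self (h : Y * B * Y = Y) : IsIdempotentElem (B * Y) := by
  rw [IsIdempotentElem, Matrix.mul_assoc, ← Matrix.mul_assoc Y B Y, h]

lemma isIdempotentElem_mul_of_mul_mul_self' (h : Y * B * Y = Y) : IsIdempotentElem (Y * B) := by
  rw [IsIdempotentElem, ← Matrix.mul_assoc, h]

lemma colSpace_mul_eq_of_mul_mul_self (h : Y * B * Y = Y) : colSpace (Y * B) = colSpace Y :=
  le_antisymm (colSpace_mul_le Y B) (by nth_rw 1 [← h]; exact colSpace_mul_le _ _)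

lemma nullSpace_mul_eq_of_mul_mul_self (h : Y * B * Y = Y) : nullSpace (B * Y) = nullSpace Y :=
  nullSpace_eq_of_eq_mul_of_eq_mul rfl (by rw [← Matrix.mul_assoc, h])

end OuterInverse

lemma rank_pow_matIndex_eq {p : ℕ} (M : Matrix (Fin p) (Fin p) ℂ) :
    (M ^ matIndex M).rank = (M ^ (matIndex M + 1)).rank := by
  obtain ⟨j, hj⟩ := WellFounded.not_rel_apply_succ (r := (· < ·)) fun j => (M ^ j).rank
  exact Nat.sInf_mem (s := {j : ℕ | (M ^ j).rank = (M ^ (j + 1)).rank})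
    ⟨j, le_antisymm (not_lt.mp hj) (pow_succ M j ▸ rank_mul_le_left _ _)⟩

lemma colSpace_pow_succ_matIndex {p : ℕ} (M : Matrix (Fin p) (Fin p) ℂ) :
    colSpace (M ^ (matIndex M + 1)) = colSpace (M ^ matIndex M) :=
  colSpace_eq_of_le_of_rank_le (pow_succ M _ ▸ colSpace_mul_le _ _) (rank_pow_matIndex_eq M).le

lemma colSpace_eq_of_mul_pow_succ_eq_pow {a k : ℕ} {G : Matrix (Fin a) (Fin a) ℂ}
    {A : Matrix (Fin a) (Fin a) ℂ} (hG : G * A ^ (k + 1) = A ^ k) (hr : G.rank ≤ (A ^ k).rank) :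
    colSpace G = colSpace (A ^ k) :=
  (colSpace_eq_of_le_of_rank_le (hG ▸ colSpace_mul_le G _) hr).symm

theorem weighted_weak_MPD_projections_general {m n : ℕ}
    (B : Matrix (Fin m) (Fin n) ℂ) (W : Matrix (Fin n) (Fin m) ℂ)
    (k : ℕ) (hk : k = matIndex (B * W))
    (H : Matrix (Fin n) (Fin m) ℂ)
    (hH1 : B * H * B = B)
    (X : Matrix (Fin m) (Fin n) ℂ)
    (hX1 : X * W * (B * W) ^ (k + 1) = (B * W) ^ k)
    (hX2 : X.rank = ((B * W) ^ k).rank)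
    (Y : Matrix (Fin n) (Fin m) ℂ) (hY : Y = H * B * W * X * W) :
    ((B * Y) * (B * Y) = B * Y ∧
      colSpace (B * Y) = colSpace ((B * W) ^ k) ∧
      nullSpace (B * Y) = nullSpace (X * W)) ∧
    ((Y * B) * (Y * B) = Y * B ∧
      colSpace (Y * B) = colSpace (H * (B * W) ^ (k + 1)) ∧
      nullSpace (Y * B) = nullSpace (X * W * B)) ∧
    (Y * B * Y = Y ∧
      colSpace Y = colSpace (H * (B * W) ^ (k + 1)) ∧
      nullSpace Y = nullSpace (X * W)) := by
  have hcolPow : colSpace ((B * W) ^ (k + 1)) = colSpace ((B * W) ^ k) := by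
    subst hk; exact colSpace_pow_succ_matIndex _
  have hcolG : colSpace (X * W) = colSpace ((B * W) ^ k) :=
    colSpace_eq_of_mul_pow_succ_eq_pow hX1 (hX2 ▸ rank_mul_le_left X W)
  have hGAG : X * W * (B * W) * (X * W) = X * W :=
    mul_mul_self_eq_self_of_colSpace_le hcolG.le (by rw [Matrix.mul_assoc, ← pow_succ', hX1])
  replace hY : Y = H * (B * W) * (X * W) := by simp only [hY, Matrix.mul_assoc]
  have hGBY : X * W * B * Y = X * W :=
    calc X * W * B * Y = X * W * (B * H * B * W) * (X * W) := by simp only [hY, Matrix.mul_assoc]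
      _ = X * W := by rw [hH1, hGAG]
  have hYBY : Y * B * Y = Y :=
    calc Y * B * Y = H * (B * W) * (X * W * B * Y) := by nth_rw 1 [hY]; simp only [Matrix.mul_assoc]
      _ = Y := by rw [hGBY, hY]
  have hBY : B * Y = B * W * (X * W) :=
    calc B * Y = B * H * B * W * (X * W) := by simp only [hY, Matrix.mul_assoc]
      _ = B * W * (X * W) := by rw [hH1]
  have hcolY : colSpace Y = colSpace (H * (B * W) ^ (k + 1)) := by
    rw [hY, colSpace_mul, hcolG, ← colSpace_mul, Matrix.mul_assoc, ← pow_succ']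
  have hnullY : nullSpace Y = nullSpace (X * W) :=
    nullSpace_eq_of_eq_mul_of_eq_mul hY hGBY.symm
  refine ⟨⟨isIdempotentElem_mul_of_mul_mul_self hYBY, ?_, ?_⟩,
    ⟨isIdempotentElem_mul_of_mul_mul_self' hYBY, ?_, ?_⟩, hYBY, hcolY, hnullY⟩
  · rw [hBY, colSpace_mul, hcolG, ← colSpace_mul, ← pow_succ', hcolPow]
  · rw [nullSpace_mul_eq_of_mul_mul_self hYBY, hnullY]
  · rw [colSpace_mul_eq_of_mul_mul_self hYBY, hcolY]
  · refine nullSpace_eq_of_eq_mul_of_eq_mul (P := H * (B * W)) (Q := X * W * B) ?_ ?_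
    · rw [hY, Matrix.mul_assoc]
    · rw [← Matrix.mul_assoc, hGBY]

/-- **Lemma 3.6.** Projection properties of the W-weighted weak MPD inverse `Y = H·B·W·X·W`. -/
theorem weighted_weak_MPD_projections {m n : ℕ}
    (B : Matrix (Fin m) (Fin n) ℂ) (W : Matrix (Fin n) (Fin m) ℂ)
    (k : ℕ) (hk : k = matIndex (B * W))
    (H : Matrix (Fin n) (Fin m) ℂ)
    (hH1 : B * H * B = B) (hH2 : H * B * H = H)
    (hH3 : (B * H)ᴴ = B * H) (hH4 : (H * B)ᴴ = H * B)
    (X : Matrix (Fin m) (Fin n) ℂ)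
    (hX1 : X * W * (B * W) ^ (k + 1) = (B * W) ^ k)
    (hX2 : X.rank = ((B * W) ^ k).rank)
    (Y : Matrix (Fin n) (Fin m) ℂ) (hY : Y = H * B * W * X * W) :
    ((B * Y) * (B * Y) = B * Y ∧
      colSpace (B * Y) = colSpace ((B * W) ^ k) ∧
      nullSpace (B * Y) = nullSpace (X * W)) ∧
    ((Y * B) * (Y * B) = Y * B ∧
      colSpace (Y * B) = colSpace (H * (B * W) ^ (k + 1)) ∧
      nullSpace (Y * B) = nullSpace (X * W * B)) ∧
    (Y * B * Y = Y ∧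
      colSpace Y = colSpace (H * (B * W) ^ (k + 1)) ∧
      nullSpace Y = nullSpace (X * W)) :=
  weighted_weak_MPD_projections_general B W k hk H hH1 X hX1 hX2 Y hY
end

section
/- Let B ∈ ℂ^{m×n}, W ∈ ℂ^{n×m}, let k be a natural number with k = ind(WB), let H be the Moore–Penrose inverse of B, let Z be a minimal rank W-weighted right weak Drazin inverse of B, and set Y₁ = W·Z·W·B·H. Then: (i) B·Y₁ is idempotent with col(B·Y₁) = col(B·W·Z) and N(B·Y₁) = N((W·B)^{k+1}·H); (ii) Y₁·B is idempotent with col(Y₁·B) = col(W·Z) and N(Y₁·B) = N((W·B)^k); (iii) Y₁·B·Y₁ = Y₁, col(Y₁) = col(W·Z) and N(Y₁) = N((W·B)^{k+1}·H). -/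
open Matrix

/-!
Write `A = W * B` and `X = W * Z`. Then `A ^ (k + 1) * X = A ^ k` and `rank X ≤ rank (A ^ k)`, so
`X` and `A ^ k` have the same null space; as `A ^ k * (A * X - 1) = 0`, this gives `X * A * X = X`.
Together with `B * H * B = B` it yields `Y₁ * B = X * A` and `Y₁ * B * Y₁ = Y₁`, so `Y₁` is an outer
inverse of `B` with the column space of `X`, and every claim reduces to facts about `X`. The index
enters only through `N(A ^ (k + 1)) = N(A ^ k)`, which gives `N(X * A) = N(A ^ k)`.
-/

section ColSpaceNullSpace

variable {a b c : ℕ}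

lemma nullSpace_mul (M : Matrix (Fin a) (Fin b) ℂ) (N : Matrix (Fin b) (Fin c) ℂ) :
    nullSpace (M * N) = (nullSpace M).comap N.mulVecLin := by
  rw [nullSpace, nullSpace, Matrix.mulVecLin_mul, LinearMap.ker_comp]

lemma nullSpace_eq_top_iff {M : Matrix (Fin a) (Fin b) ℂ} : nullSpace M = ⊤ ↔ M = 0 := by
  rw [nullSpace, LinearMap.ker_eq_top, ← Matrix.toLin'_apply', LinearEquiv.map_eq_zero_iff]

lemma finrank_nullSpace_add_rank (M : Matrix (Fin a) (Fin b) ℂ) :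
    Module.finrank ℂ (nullSpace M) + M.rank = b := by
  have h := M.mulVecLin.finrank_range_add_finrank_ker
  rw [Module.finrank_fin_fun] at h
  rw [nullSpace, Matrix.rank]
  omega

lemma nullSpace_eq_of_le_of_rank_le {M : Matrix (Fin a) (Fin b) ℂ} {N : Matrix (Fin c) (Fin b) ℂ}
    (hle : nullSpace M ≤ nullSpace N) (hrank : M.rank ≤ N.rank) : nullSpace M = nullSpace N := by
  refine Submodule.eq_of_le_of_finrank_le hle ?_
  have hM := finrank_nullSpace_add_rank M
  have hN := finrank_nullSpace_add_rank N
  omega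

lemma nullSpace_mul_eq_of_nullSpace_eq {M : Matrix (Fin a) (Fin b) ℂ}
    {N : Matrix (Fin c) (Fin b) ℂ} (h : nullSpace M = nullSpace N) {d : ℕ}
    (C : Matrix (Fin b) (Fin d) ℂ) : nullSpace (M * C) = nullSpace (N * C) := by
  rw [nullSpace_mul, nullSpace_mul, h]

lemma mul_eq_zero_iff_of_nullSpace_eq {M : Matrix (Fin a) (Fin b) ℂ}
    {N : Matrix (Fin c) (Fin b) ℂ} (h : nullSpace M = nullSpace N) {d : ℕ}
    (C : Matrix (Fin b) (Fin d) ℂ) : M * C = 0 ↔ N * C = 0 := by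
  rw [← nullSpace_eq_top_iff, ← nullSpace_eq_top_iff, nullSpace_mul_eq_of_nullSpace_eq h]

end ColSpaceNullSpace

lemma Matrix.mul_pow_mul_eq_pow_mul {l o R : Type*} [Fintype l] [Fintype o] [DecidableEq l]
    [DecidableEq o] [Semiring R] (W : Matrix l o R) (B : Matrix o l R) (j : ℕ) :
    W * (B * W) ^ j = (W * B) ^ j * W := by
  induction j with
  | zero => simp
  | succ j ih =>
    rw [pow_succ, pow_succ, ← Matrix.mul_assoc, ih]
    simp only [Matrix.mul_assoc]

lemma rank_pow_matIndex_succ {p : ℕ} (M : Matrix (Fin p) (Fin p) ℂ) :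
    (M ^ (matIndex M + 1)).rank = (M ^ matIndex M).rank := by
  have hne : {j : ℕ | (M ^ j).rank = (M ^ (j + 1)).rank}.Nonempty := by
    obtain ⟨j, hj⟩ := WellFounded.not_rel_apply_succ (r := (· < ·)) fun j ↦ (M ^ j).rank
    refine ⟨j, le_antisymm (not_lt.1 hj) ?_⟩
    rw [pow_succ]
    exact Matrix.rank_mul_le_left _ _
  exact (Nat.sInf_mem hne).symm

/-- The paper asks for `rank X = rank (A ^ k)`; `≥` follows from `A ^ (k + 1) * X = A ^ k`. -/
structure IsMinRankRightWeakDrazinInv {n : ℕ} (A X : Matrix (Fin n) (Fin n) ℂ) (k : ℕ) : Prop where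
  pow_succ_mul : A ^ (k + 1) * X = A ^ k
  rank_le : X.rank ≤ (A ^ k).rank

namespace IsMinRankRightWeakDrazinInv

variable {n k : ℕ} {A X : Matrix (Fin n) (Fin n) ℂ}

lemma of_weighted {m : ℕ} {B : Matrix (Fin m) (Fin n) ℂ} {W : Matrix (Fin n) (Fin m) ℂ}
    {Z : Matrix (Fin m) (Fin n) ℂ} (hZ : W * (B * W) ^ (k + 1) * Z = (W * B) ^ k)
    (hrank : Z.rank = ((W * B) ^ k).rank) :
    IsMinRankRightWeakDrazinInv (W * B) (W * Z) k where
  pow_succ_mul := by rw [← Matrix.mul_assoc, ← Matrix.mul_pow_mul_eq_pow_mul, hZ]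
  rank_le := hrank ▸ Matrix.rank_mul_le_right W Z

lemma nullSpace_eq (hX : IsMinRankRightWeakDrazinInv A X k) : nullSpace X = nullSpace (A ^ k) := by
  refine nullSpace_eq_of_le_of_rank_le ?_ hX.rank_le
  rw [← hX.pow_succ_mul]
  exact nullSpace_le_nullSpace_mul _ _

lemma mul_mul_self (hX : IsMinRankRightWeakDrazinInv A X k) : X * A * X = X := by
  have hAk : A ^ k * (A * X - 1) = 0 := by
    rw [Matrix.mul_sub, Matrix.mul_one, ← Matrix.mul_assoc, ← pow_succ, hX.pow_succ_mul, sub_self]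
  have hX1 := (mul_eq_zero_iff_of_nullSpace_eq hX.nullSpace_eq _).2 hAk
  rwa [Matrix.mul_sub, Matrix.mul_one, sub_eq_zero, ← Matrix.mul_assoc] at hX1

lemma nullSpace_mul_eq (hX : IsMinRankRightWeakDrazinInv A X k)
    (hk : (A ^ (k + 1)).rank = (A ^ k).rank) : nullSpace (X * A) = nullSpace (A ^ k) := by
  have hpow : nullSpace (A ^ k) = nullSpace (A ^ (k + 1)) := by
    refine nullSpace_eq_of_le_of_rank_le ?_ hk.ge
    rw [pow_succ']
    exact nullSpace_le_nullSpace_mul _ _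
  rw [nullSpace_mul_eq_of_nullSpace_eq hX.nullSpace_eq, ← pow_succ, hpow]

end IsMinRankRightWeakDrazinInv

section OuterInverse

variable {m n : ℕ} {B : Matrix (Fin m) (Fin n) ℂ} {Y : Matrix (Fin n) (Fin m) ℂ}

lemma isIdempotentElem_mul_left_of_mul_mul_eq_self (hY : Y * B * Y = Y) :
    IsIdempotentElem (B * Y) := by
  unfold IsIdempotentElem
  rw [Matrix.mul_assoc, ← Matrix.mul_assoc Y B Y, hY]

lemma isIdempotentElem_mul_right_of_mul_mul_eq_self (hY : Y * B * Y = Y) :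
    IsIdempotentElem (Y * B) := by
  unfold IsIdempotentElem
  rw [← Matrix.mul_assoc, hY]

lemma colSpace_mul_eq_of_mul_mul_eq_self (hY : Y * B * Y = Y) :
    colSpace (Y * B) = colSpace Y := by
  refine le_antisymm (colSpace_mul_le _ _) ?_
  conv_lhs => rw [← hY]
  exact colSpace_mul_le _ _

lemma nullSpace_mul_eq_of_mul_mul_eq_self (hY : Y * B * Y = Y) :
    nullSpace (B * Y) = nullSpace Y := by
  refine le_antisymm ?_ (nullSpace_le_nullSpace_mul _ _)
  conv_rhs => rw [← hY, Matrix.mul_assoc]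
  exact nullSpace_le_nullSpace_mul _ _

end OuterInverse

namespace WeightedWeakDMP

variable {m n : ℕ} {B : Matrix (Fin m) (Fin n) ℂ} {W H Y : Matrix (Fin n) (Fin m) ℂ}
  {X : Matrix (Fin n) (Fin n) ℂ}

lemma mul_right_eq (hH : B * H * B = B) (hY : Y = X * W * B * H) : Y * B = X * (W * B) := by
  rw [hY]
  simp only [Matrix.mul_assoc]
  rw [← Matrix.mul_assoc B H B, hH]

lemma mul_mul_self (hH : B * H * B = B) (hX : X * (W * B) * X = X) (hY : Y = X * W * B * H) :
    Y * B * Y = Y :=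
  calc Y * B * Y = X * (W * B) * X * (W * B * H) := by
        rw [mul_right_eq hH hY, hY]; simp only [Matrix.mul_assoc]
    _ = Y := by rw [hX, hY]; simp only [Matrix.mul_assoc]

lemma colSpace_eq (hH : B * H * B = B) (hX : X * (W * B) * X = X) (hY : Y = X * W * B * H) :
    colSpace Y = colSpace X := by
  have hYX : Y = X * (W * B * H) := by rw [hY]; simp only [Matrix.mul_assoc]
  have hXY : X = Y * (B * X) := by rw [← Matrix.mul_assoc, mul_right_eq hH hY, hX]
  refine le_antisymm ?_ ?_
  · rw [hYX]; exact colSpace_mul_le _ _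
  · conv_lhs => rw [hXY]
    exact colSpace_mul_le _ _

end WeightedWeakDMP

theorem weighted_weak_DMP_projections_general {m n : ℕ}
    (B : Matrix (Fin m) (Fin n) ℂ) (W : Matrix (Fin n) (Fin m) ℂ)
    (k : ℕ) (hk : k = matIndex (W * B))
    (H : Matrix (Fin n) (Fin m) ℂ)
    (hH1 : B * H * B = B)
    (Z : Matrix (Fin m) (Fin n) ℂ)
    (hZ1 : W * (B * W) ^ (k + 1) * Z = (W * B) ^ k)
    (hZ2 : Z.rank = ((W * B) ^ k).rank)
    (Y₁ : Matrix (Fin n) (Fin m) ℂ) (hY₁ : Y₁ = W * Z * W * B * H) :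
    ((B * Y₁) * (B * Y₁) = B * Y₁ ∧
      colSpace (B * Y₁) = colSpace (B * W * Z) ∧
      nullSpace (B * Y₁) = nullSpace ((W * B) ^ (k + 1) * H)) ∧
    ((Y₁ * B) * (Y₁ * B) = Y₁ * B ∧
      colSpace (Y₁ * B) = colSpace (W * Z) ∧
      nullSpace (Y₁ * B) = nullSpace ((W * B) ^ k)) ∧
    (Y₁ * B * Y₁ = Y₁ ∧
      colSpace Y₁ = colSpace (W * Z) ∧
      nullSpace Y₁ = nullSpace ((W * B) ^ (k + 1) * H)) := by
  have hX := IsMinRankRightWeakDrazinInv.of_weighted hZ1 hZ2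
  have hXAX := hX.mul_mul_self
  have hYBY := WeightedWeakDMP.mul_mul_self hH1 hXAX hY₁
  have hcol := WeightedWeakDMP.colSpace_eq hH1 hXAX hY₁
  have hnull : nullSpace Y₁ = nullSpace ((W * B) ^ (k + 1) * H) := by
    have hY : Y₁ = W * Z * (W * B * H) := by rw [hY₁]; simp only [Matrix.mul_assoc]
    rw [hY, nullSpace_mul_eq_of_nullSpace_eq hX.nullSpace_eq, pow_succ]
    simp only [Matrix.mul_assoc]
  refine ⟨⟨isIdempotentElem_mul_left_of_mul_mul_eq_self hYBY, ?_, ?_⟩,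
    ⟨isIdempotentElem_mul_right_of_mul_mul_eq_self hYBY, ?_, ?_⟩, ⟨hYBY, hcol, hnull⟩⟩
  · rw [Matrix.mul_assoc B W Z, colSpace_mul, colSpace_mul, hcol]
  · rw [nullSpace_mul_eq_of_mul_mul_eq_self hYBY, hnull]
  · rw [colSpace_mul_eq_of_mul_mul_eq_self hYBY, hcol]
  · rw [WeightedWeakDMP.mul_right_eq hH1 hY₁, hX.nullSpace_mul_eq (hk ▸ rank_pow_matIndex_succ _)]

/-- **Lemma 3.7.** Projection properties of the W-weighted weak DMP inverse `Y₁ = W·Z·W·B·H`. -/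
theorem weighted_weak_DMP_projections {m n : ℕ}
    (B : Matrix (Fin m) (Fin n) ℂ) (W : Matrix (Fin n) (Fin m) ℂ)
    (k : ℕ) (hk : k = matIndex (W * B))
    (H : Matrix (Fin n) (Fin m) ℂ)
    (hH1 : B * H * B = B) (hH2 : H * B * H = H)
    (hH3 : (B * H)ᴴ = B * H) (hH4 : (H * B)ᴴ = H * B)
    (Z : Matrix (Fin m) (Fin n) ℂ)
    (hZ1 : W * (B * W) ^ (k + 1) * Z = (W * B) ^ k)
    (hZ2 : Z.rank = ((W * B) ^ k).rank)
    (Y₁ : Matrix (Fin n) (Fin m) ℂ) (hY₁ : Y₁ = W * Z * W * B * H) :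
    ((B * Y₁) * (B * Y₁) = B * Y₁ ∧
      colSpace (B * Y₁) = colSpace (B * W * Z) ∧
      nullSpace (B * Y₁) = nullSpace ((W * B) ^ (k + 1) * H)) ∧
    ((Y₁ * B) * (Y₁ * B) = Y₁ * B ∧
      colSpace (Y₁ * B) = colSpace (W * Z) ∧
      nullSpace (Y₁ * B) = nullSpace ((W * B) ^ k)) ∧
    (Y₁ * B * Y₁ = Y₁ ∧
      colSpace Y₁ = colSpace (W * Z) ∧
      nullSpace Y₁ = nullSpace ((W * B) ^ (k + 1) * H)) :=
  weighted_weak_DMP_projections_general B W k hk H hH1 Z hZ1 hZ2 Y₁ hY₁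
end

section
/- Let B ∈ ℂ^{m×n}, W ∈ ℂ^{n×m}, let k be a natural number with k = ind(BW), let H be the Moore–Penrose inverse of B, let D be the W-weighted Drazin inverse of B, and let X be a minimal rank W-weighted weak Drazin inverse of B. Then H·B·W·X·W = (H·B·W·D·W)·B·W·X·W. -/
open Matrix

lemma exists_left_factor {m n p : ℕ} (A : Matrix (Fin m) (Fin p) ℂ)
    (M : Matrix (Fin m) (Fin n) ℂ)
    (h : LinearMap.range M.mulVecLin ≤ LinearMap.range A.mulVecLin) :
    ∃ Y : Matrix (Fin p) (Fin n) ℂ, M = A * Y := by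
  have hc : ∀ j : Fin n, ∃ y : Fin p → ℂ, A *ᵥ y = M *ᵥ Pi.single j 1 := by
    intro j
    exact h (LinearMap.mem_range_self _ (Pi.single j 1))
  choose y hy using hc
  refine ⟨Matrix.of fun i j => y j i, ?_⟩
  ext i j
  have h1 := congrFun (hy j) i
  simp only [Matrix.mulVec_single, mul_one, MulOpposite.op_one, one_smul, Matrix.col_apply] at h1
  rw [Matrix.mul_apply, ← h1, Matrix.mulVec]
  rfl

/-- **Lemma 3.10.** `H·B·W·X·W = (H·B·W·D·W)·B·W·X·W`, where `H·B·W·D·W` is the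
W-weighted MPD inverse of `B`. -/
theorem weighted_weak_MPD_via_MPD {m n : ℕ}
    (B : Matrix (Fin m) (Fin n) ℂ) (W : Matrix (Fin n) (Fin m) ℂ)
    (k : ℕ) (hk : k = matIndex (B * W))
    (H : Matrix (Fin n) (Fin m) ℂ)
    (hH1 : B * H * B = B) (hH2 : H * B * H = H)
    (hH3 : (B * H)ᴴ = B * H) (hH4 : (H * B)ᴴ = H * B)
    (D : Matrix (Fin m) (Fin n) ℂ)
    (hD1 : D * W * B * W * D = D) (hD2 : B * W * D = D * W * B)
    (hD3 : (B * W) ^ (k + 1) * D * W = (B * W) ^ k)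
    (X : Matrix (Fin m) (Fin n) ℂ)
    (hX1 : X * W * (B * W) ^ (k + 1) = (B * W) ^ k)
    (hX2 : X.rank = ((B * W) ^ k).rank) :
    H * B * W * X * W = (H * B * W * D * W) * B * W * X * W := by
  have hcomm : ∀ j : ℕ, (B * W) ^ j * D = D * (W * B) ^ j := by
    intro j
    induction j with
    | zero => simp
    | succ j ih =>
      rw [pow_succ, pow_succ, Matrix.mul_assoc ((B * W) ^ j) (B * W) D, hD2,
        Matrix.mul_assoc D W B, ← Matrix.mul_assoc ((B * W) ^ j) D (W * B), ih,
        Matrix.mul_assoc]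
  have hWB : ∀ j : ℕ, (W * B) ^ j * W = W * (B * W) ^ j := by
    intro j
    induction j with
    | zero => simp
    | succ j ih =>
      rw [pow_succ, pow_succ, Matrix.mul_assoc ((W * B) ^ j) (W * B) W,
        Matrix.mul_assoc W B W, ← Matrix.mul_assoc ((W * B) ^ j) W (B * W), ih,
        Matrix.mul_assoc]
  have hkey : D * W * (B * W) ^ (k + 1) = (B * W) ^ k := by
    have h1 : (B * W) ^ (k + 1) * D * W = D * ((W * B) ^ (k + 1) * W) := by
      rw [hcomm (k + 1), Matrix.mul_assoc]
    rw [← hD3, h1, hWB, ← Matrix.mul_assoc]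
  have hle : LinearMap.range ((B * W) ^ k).mulVecLin ≤ LinearMap.range X.mulVecLin := by
    rw [← hX1, Matrix.mul_assoc, Matrix.mulVecLin_mul]
    exact LinearMap.range_comp_le_range _ _
  have heq : LinearMap.range ((B * W) ^ k).mulVecLin = LinearMap.range X.mulVecLin := by
    apply Submodule.eq_of_le_of_finrank_le hle
    exact hX2.le
  obtain ⟨Y, hY⟩ := exists_left_factor ((B * W) ^ k) X heq.ge
  have h2 : B * W * ((B * W) ^ k * Y) = (B * W) ^ (k + 1) * Y := by
    rw [← Matrix.mul_assoc, ← pow_succ']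
  have hBWX : B * W * (D * W * (B * W * X)) = B * W * X := by
    rw [hY, h2, ← Matrix.mul_assoc (D * W) ((B * W) ^ (k + 1)) Y, hkey]
    exact h2
  calc H * B * W * X * W
      = H * (B * W * (D * W * (B * W * X))) * W := by
        rw [hBWX, Matrix.mul_assoc H B, Matrix.mul_assoc H (B * W)]
    _ = H * B * W * D * W * B * W * X * W := by
        simp only [Matrix.mul_assoc]
end

section
/- Let B ∈ ℂ^{m×n}, W ∈ ℂ^{n×m}, let k be a natural number with k = ind(WB), let H be the Moore–Penrose inverse of B, let D be the W-weighted Drazin inverse of B, and let Z be a minimal rank W-weighted right weak Drazin inverse of B. Then W·Z·W·B·H = W·Z·W·B·(W·D·W·B·H). -/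
open Matrix

/-!
Write `E = W·B - W·B·(W·D·W·B)`; the difference of the two sides is `W·(Z·E)·H`. The Drazin equation gives
`(W·B)^(k+1)·(W·D·W·B) = (W·B)^(k+1)`, i.e. `(W·B)^k·E = 0`. The first equation for `Z` writes
`(W·B)^k` as a left multiple of `Z`, so `ker Z ⊆ ker (W·B)^k`, and equality of ranks makes the
two kernels equal; hence `Z·E = 0` as well.
-/

namespace Matrix

section Semiring

variable {R : Type*} [Semiring R] {m n : Type*} [Fintype m] [Fintype n]
  [DecidableEq m] [DecidableEq n]

theorem mul_pow_mul_s9 (A : Matrix n m R) (B : Matrix m n R) (j : ℕ) :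
    (A * B) ^ j * A = A * (B * A) ^ j := by
  induction j with
  | zero => simp
  | succ j ih => rw [pow_succ', Matrix.mul_assoc, ih, Matrix.mul_assoc, ← Matrix.mul_assoc B,
      ← pow_succ']

theorem pow_succ_mul_weightedDrazin {B : Matrix m n R} {W : Matrix n m R} {D : Matrix m n R}
    {k : ℕ} (hD : (B * W) ^ (k + 1) * D * W = (B * W) ^ k) :
    (W * B) ^ (k + 1) * (W * D * W * B) = (W * B) ^ (k + 1) := by
  calc (W * B) ^ (k + 1) * (W * D * W * B)
      = (W * B) ^ (k + 1) * W * D * W * B := by simp only [Matrix.mul_assoc]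
    _ = W * ((B * W) ^ (k + 1) * D * W) * B := by
        rw [mul_pow_mul_s9]; simp only [Matrix.mul_assoc]
    _ = (W * B) ^ (k + 1) := by
        rw [hD, ← mul_pow_mul_s9, Matrix.mul_assoc, ← pow_succ]

end Semiring

section Field

variable {K : Type*} [Field K] {l m n p : Type*} [Fintype n] [Fintype p]

theorem ker_mulVecLin_eq_of_mul_eq_of_rank_eq [Fintype m] {X : Matrix l m K} {Z : Matrix m n K}
    {Y : Matrix l n K} (hXZ : X * Z = Y) (hrank : Z.rank = Y.rank) :
    LinearMap.ker Z.mulVecLin = LinearMap.ker Y.mulVecLin := by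
  have hle : LinearMap.ker Z.mulVecLin ≤ LinearMap.ker Y.mulVecLin := by
    rw [← hXZ, Matrix.mulVecLin_mul]
    exact LinearMap.ker_le_ker_comp _ _
  refine Submodule.eq_of_le_of_finrank_eq hle ?_
  have hZ := Z.mulVecLin.finrank_range_add_finrank_ker
  have hY := Y.mulVecLin.finrank_range_add_finrank_ker
  have : Module.finrank K (LinearMap.range Z.mulVecLin)
      = Module.finrank K (LinearMap.range Y.mulVecLin) := hrank
  omega

theorem mul_eq_zero_of_ker_mulVecLin_le {Y : Matrix l n K} {Z : Matrix m n K}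
    {E : Matrix n p K} (hker : LinearMap.ker Y.mulVecLin ≤ LinearMap.ker Z.mulVecLin)
    (hYE : Y * E = 0) : Z * E = 0 := by
  have hrange : LinearMap.range E.mulVecLin ≤ LinearMap.ker Y.mulVecLin := by
    rw [LinearMap.range_le_ker_iff, ← Matrix.mulVecLin_mul, hYE, Matrix.mulVecLin_zero]
  have hZE : Z.mulVecLin ∘ₗ E.mulVecLin = 0 := LinearMap.range_le_ker_iff.mp (hrange.trans hker)
  rw [← Matrix.mulVecLin_mul] at hZE
  classical
  exact Matrix.toLin'.injective (by rw [Matrix.toLin'_apply', hZE, map_zero])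

end Field

end Matrix

theorem weighted_weak_DMP_via_DMP_general {m n : ℕ}
    (B : Matrix (Fin m) (Fin n) ℂ) (W : Matrix (Fin n) (Fin m) ℂ)
    (k : ℕ)
    (H : Matrix (Fin n) (Fin m) ℂ)
    (D : Matrix (Fin m) (Fin n) ℂ)
    (hD3 : (B * W) ^ (k + 1) * D * W = (B * W) ^ k)
    (Z : Matrix (Fin m) (Fin n) ℂ)
    (hZ1 : W * (B * W) ^ (k + 1) * Z = (W * B) ^ k)
    (hZ2 : Z.rank = ((W * B) ^ k).rank) :
    W * Z * W * B * H = W * Z * W * B * (W * D * W * B * H) := by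
  have hker : LinearMap.ker Z.mulVecLin = LinearMap.ker ((W * B) ^ k).mulVecLin :=
    ker_mulVecLin_eq_of_mul_eq_of_rank_eq hZ1 hZ2
  have hpowE : (W * B) ^ k * (W * B - W * B * (W * D * W * B)) = 0 := by
    rw [Matrix.mul_sub, ← Matrix.mul_assoc _ (W * B), ← pow_succ,
      pow_succ_mul_weightedDrazin hD3, sub_self]
  have hZE := mul_eq_zero_of_ker_mulVecLin_le hker.ge hpowE
  rw [← sub_eq_zero]
  calc W * Z * W * B * H - W * Z * W * B * (W * D * W * B * H)
      = W * (Z * (W * B - W * B * (W * D * W * B))) * H := by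
        simp only [Matrix.mul_sub, Matrix.sub_mul, Matrix.mul_assoc]
    _ = 0 := by rw [hZE, Matrix.mul_zero, Matrix.zero_mul]

/-- **Lemma 3.11.** `W·Z·W·B·H = W·Z·W·B·(W·D·W·B·H)`, where `W·D·W·B·H` is the
W-weighted DMP inverse of `B`. -/
theorem weighted_weak_DMP_via_DMP {m n : ℕ}
    (B : Matrix (Fin m) (Fin n) ℂ) (W : Matrix (Fin n) (Fin m) ℂ)
    (k : ℕ) (hk : k = matIndex (W * B))
    (H : Matrix (Fin n) (Fin m) ℂ)
    (hH1 : B * H * B = B) (hH2 : H * B * H = H)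
    (hH3 : (B * H)ᴴ = B * H) (hH4 : (H * B)ᴴ = H * B)
    (D : Matrix (Fin m) (Fin n) ℂ)
    (hD1 : D * W * B * W * D = D) (hD2 : B * W * D = D * W * B)
    (hD3 : (B * W) ^ (k + 1) * D * W = (B * W) ^ k)
    (Z : Matrix (Fin m) (Fin n) ℂ)
    (hZ1 : W * (B * W) ^ (k + 1) * Z = (W * B) ^ k)
    (hZ2 : Z.rank = ((W * B) ^ k).rank) :
    W * Z * W * B * H = W * Z * W * B * (W * D * W * B * H) :=
  weighted_weak_DMP_via_DMP_general B W k H D hD3 Z hZ1 hZ2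
end

section
/- Let B ∈ ℂ^{m×n}, W ∈ ℂ^{n×m}, let k be a natural number with k = ind(BW), let H be the Moore–Penrose inverse of B, and let X be a minimal rank W-weighted weak Drazin inverse of B. Then a matrix Y ∈ ℂ^{n×m} satisfies Y·(B·W)^{k+1} = H·(B·W)^{k+1} if and only if there exists Z ∈ ℂ^{n×m} such that Y = H + Z·(I − B·W·X·W). -/
open Matrix

/-!
Write `A = B·W` and `P = A·X·W`. From `X·W·A^(k+1) = A^k` we get `P·A^(k+1) = A^(k+1)`, and the
same equation shows that the column space of `A^k` lies in that of `X`; the rank condition makes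
them equal, so `X = A^k·V` and `P = A^(k+1)·(V·W)`. Any `P` that fixes `A^(k+1)` from the left
and factors through it on the right makes `Z ↦ H + Z·(1 - P)` sweep out the solutions of
`Y·A^(k+1) = H·A^(k+1)`: take `Z = Y - H`.
-/

namespace Matrix

variable {R K : Type*} {l m n : Type*}

theorem exists_mul_eq_of_range_mulVecLin_le [CommSemiring R] [Fintype m] [Fintype n]
    [DecidableEq n] (M : Matrix l m R) (X : Matrix l n R)
    (h : LinearMap.range X.mulVecLin ≤ LinearMap.range M.mulVecLin) :
    ∃ V : Matrix m n R, M * V = X := by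
  choose v hv using fun j : n => h ⟨Pi.single j 1, rfl⟩
  refine ⟨of fun i j => v j i, ?_⟩
  ext i j
  simpa [mulVec, dotProduct, mul_apply, Pi.single_apply] using congrFun (hv j) i

theorem exists_mul_eq_of_mul_eq_of_rank_le [Field K] [Fintype m] [Fintype n]
    [DecidableEq n] (X : Matrix l n K) (C : Matrix n m K) (A : Matrix l m K)
    (hXC : X * C = A) (hrank : X.rank ≤ A.rank) : ∃ V : Matrix m n K, A * V = X := by
  have hle : LinearMap.range A.mulVecLin ≤ LinearMap.range X.mulVecLin := by
    rw [← hXC, mulVecLin_mul]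
    exact LinearMap.range_comp_le_range _ _
  exact exists_mul_eq_of_range_mulVecLin_le A X
    (Submodule.eq_of_le_of_finrank_le hle hrank).ge

theorem mul_eq_mul_iff_exists_eq_add_mul_one_sub [Ring R] [Fintype m] [DecidableEq m]
    {M P : Matrix m m R} (hPM : P * M = M) (hPfac : ∃ Q, P = M * Q) (G Y : Matrix l m R) :
    Y * M = G * M ↔ ∃ Z : Matrix l m R, Y = G + Z * (1 - P) := by
  constructor
  · intro hY
    obtain ⟨Q, rfl⟩ := hPfac
    refine ⟨Y - G, ?_⟩
    have hker : (Y - G) * M = 0 := by rw [Matrix.sub_mul, hY, sub_self]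
    rw [Matrix.mul_sub, Matrix.mul_one, ← Matrix.mul_assoc, hker, Matrix.zero_mul, sub_zero,
      add_sub_cancel]
  · rintro ⟨Z, rfl⟩
    rw [Matrix.add_mul, Matrix.mul_assoc, Matrix.sub_mul, Matrix.one_mul, hPM, sub_self,
      Matrix.mul_zero, add_zero]

end Matrix

theorem weighted_weak_MPD_general_solution_general {m n : ℕ}
    (B : Matrix (Fin m) (Fin n) ℂ) (W : Matrix (Fin n) (Fin m) ℂ)
    (k : ℕ)
    (H : Matrix (Fin n) (Fin m) ℂ)
    (X : Matrix (Fin m) (Fin n) ℂ)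
    (hX1 : X * W * (B * W) ^ (k + 1) = (B * W) ^ k)
    (hX2 : X.rank = ((B * W) ^ k).rank)
    (Y : Matrix (Fin n) (Fin m) ℂ) :
    Y * (B * W) ^ (k + 1) = H * (B * W) ^ (k + 1) ↔
      ∃ Z : Matrix (Fin n) (Fin m) ℂ, Y = H + Z * (1 - B * W * X * W) := by
  have hfix : B * W * X * W * (B * W) ^ (k + 1) = (B * W) ^ (k + 1) := by
    calc _ = B * W * (X * W * (B * W) ^ (k + 1)) := by simp only [Matrix.mul_assoc]
      _ = _ := by rw [hX1, pow_succ']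
  obtain ⟨V, hV⟩ := exists_mul_eq_of_mul_eq_of_rank_le X (W * (B * W) ^ (k + 1)) _
    (by rw [← Matrix.mul_assoc, hX1]) hX2.le
  have hfac : B * W * X * W = (B * W) ^ (k + 1) * (V * W) := by
    rw [← hV, pow_succ']
    simp only [Matrix.mul_assoc]
  exact mul_eq_mul_iff_exists_eq_add_mul_one_sub hfix ⟨_, hfac⟩ H Y

/-- **Lemma 3.14.** The general solution of `Y·(B·W)^(k+1) = H·(B·W)^(k+1)` is
`Y = H + Z·(I − B·W·X·W)`. -/
theorem weighted_weak_MPD_general_solution {m n : ℕ}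
    (B : Matrix (Fin m) (Fin n) ℂ) (W : Matrix (Fin n) (Fin m) ℂ)
    (k : ℕ) (hk : k = matIndex (B * W))
    (H : Matrix (Fin n) (Fin m) ℂ)
    (hH1 : B * H * B = B) (hH2 : H * B * H = H)
    (hH3 : (B * H)ᴴ = B * H) (hH4 : (H * B)ᴴ = H * B)
    (X : Matrix (Fin m) (Fin n) ℂ)
    (hX1 : X * W * (B * W) ^ (k + 1) = (B * W) ^ k)
    (hX2 : X.rank = ((B * W) ^ k).rank)
    (Y : Matrix (Fin n) (Fin m) ℂ) :
    Y * (B * W) ^ (k + 1) = H * (B * W) ^ (k + 1) ↔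
      ∃ Z : Matrix (Fin n) (Fin m) ℂ, Y = H + Z * (1 - B * W * X * W) :=
  weighted_weak_MPD_general_solution_general B W k H X hX1 hX2 Y
end

section
/- Let B ∈ ℂ^{m×n}, W ∈ ℂ^{n×m}, let k be a natural number with k = ind(BW), let H be the Moore–Penrose inverse of B, let X be a minimal rank W-weighted weak Drazin inverse of B, and set Y = H·B·W·X·W. Let E ∈ ℂ^{m×n} satisfy col(E) ⊆ col(E·W), col(E·W) ⊆ col((B·W)^k), col(E^*) ⊆ col((E·W)^*), col((E·W)^*) ⊆ col((X·W·B·W)^*) and col((X·W·B·W)^*) ⊆ col(B^*). Assume I + H·E ∈ ℂ^{n×n}, I + W·E·W·X ∈ ℂ^{n×n} and I + X·W·E·W ∈ ℂ^{m×m} are invertible (in the paper this is guaranteed by max{‖W·E·W·X‖, ‖H·E‖} < 1), and set 𝔇 = B + E and G = (I + H·E)⁻¹·H. Then: (a) G is the Moore–Penrose inverse of 𝔇, and 𝔇·G = B·H, G·𝔇 = H·B; (b) I + Y·E is invertible and G·X·(I + W·E·W·X)⁻¹·W·𝔇·W·X = G·X·W·𝔇·W·(I + X·W·E·W)⁻¹·X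 = (I + Y·E)⁻¹·Y·X; (c) 𝔇·G·X·(I + W·E·W·X)⁻¹·W·𝔇·W·X = B·Y·X. -/
open Matrix

lemma col_mul_le {a b c : ℕ} (M : Matrix (Fin a) (Fin b) ℂ) (N : Matrix (Fin b) (Fin c) ℂ) :
    colSpace (M * N) ≤ colSpace M := by
  rw [colSpace, colSpace, Matrix.mulVecLin_mul]
  exact LinearMap.range_comp_le_range _ _

lemma exists_factor {a b c : ℕ} {A : Matrix (Fin a) (Fin b) ℂ} {M : Matrix (Fin a) (Fin c) ℂ}
    (h : colSpace A ≤ colSpace M) : ∃ C : Matrix (Fin c) (Fin b) ℂ, A = M * C := by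
  obtain ⟨g, hg⟩ := LinearMap.exists_rightInverse_of_surjective
    (M.mulVecLin.rangeRestrict) (LinearMap.range_rangeRestrict _)
  let f : (Fin b → ℂ) →ₗ[ℂ] (colSpace M) :=
    LinearMap.codRestrict (colSpace M) A.mulVecLin (fun x => h ⟨x, rfl⟩)
  refine ⟨LinearMap.toMatrix' (g ∘ₗ f), ?_⟩
  have key : M.mulVecLin ∘ₗ (g ∘ₗ f) = A.mulVecLin := by
    apply LinearMap.ext; intro v
    have h1 : M.mulVecLin.rangeRestrict ((g ∘ₗ f) v) = f v := by
      have := LinearMap.congr_fun hg (f v)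
      exact this
    show M.mulVecLin (g (f v)) = A.mulVecLin v
    rw [show M.mulVecLin (g (f v)) = (M.mulVecLin.rangeRestrict ((g ∘ₗ f) v) : Fin a → ℂ) from rfl,
      h1]
    rfl
  apply Matrix.toLin'.injective
  show A.mulVecLin = (M * LinearMap.toMatrix' (g ∘ₗ f)).mulVecLin
  rw [Matrix.mulVecLin_mul, ← key]
  congr 1
  exact (Matrix.toLin'_toMatrix' _).symm

lemma rank_eq_finrank_col {a b : ℕ} (M : Matrix (Fin a) (Fin b) ℂ) :
    M.rank = Module.finrank ℂ (colSpace M) := rfl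

set_option maxHeartbeats 2000000 in
/-- **Theorem 3.19.** Perturbation of the W-weighted weak MPD inverse `Y = H·B·W·X·W`.
(The paper's range chain `col(E*) ⊆ col((EW)*) ⊆ col((XWBW)*) ⊆ col(B*)` is dimensionally
inconsistent for rectangular matrices; it is rendered through its type-correct content
`col(Eᴴ) ⊆ col(Bᴴ)` and `col((EW)ᴴ) ⊆ col((XWBW)ᴴ)`.) -/
theorem weighted_weak_MPD_perturbation {m n : ℕ}
    (B : Matrix (Fin m) (Fin n) ℂ) (W : Matrix (Fin n) (Fin m) ℂ)
    (k : ℕ) (hk : k = matIndex (B * W))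
    (H : Matrix (Fin n) (Fin m) ℂ)
    (hH1 : B * H * B = B) (hH2 : H * B * H = H)
    (hH3 : (B * H)ᴴ = B * H) (hH4 : (H * B)ᴴ = H * B)
    (X : Matrix (Fin m) (Fin n) ℂ)
    (hX1 : X * W * (B * W) ^ (k + 1) = (B * W) ^ k)
    (hX2 : X.rank = ((B * W) ^ k).rank)
    (Y : Matrix (Fin n) (Fin m) ℂ) (hY : Y = H * B * W * X * W)
    (E : Matrix (Fin m) (Fin n) ℂ)
    (hE1 : colSpace E ≤ colSpace (E * W))
    (hE2 : colSpace (E * W) ≤ colSpace ((B * W) ^ k))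
    (hE3 : colSpace Eᴴ ≤ colSpace Bᴴ)
    (hE4 : colSpace (E * W)ᴴ ≤ colSpace (X * W * B * W)ᴴ)
    (hu1 : IsUnit (1 + H * E))
    (hu2 : IsUnit (1 + W * E * W * X))
    (hu3 : IsUnit (1 + X * W * E * W))
    (𝔇 : Matrix (Fin m) (Fin n) ℂ) (h𝔇 : 𝔇 = B + E)
    (G : Matrix (Fin n) (Fin m) ℂ) (hG : G = (1 + H * E)⁻¹ * H) :
    (𝔇 * G * 𝔇 = 𝔇 ∧ G * 𝔇 * G = G ∧ (𝔇 * G)ᴴ = 𝔇 * G ∧ (G * 𝔇)ᴴ = G * 𝔇 ∧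
      𝔇 * G = B * H ∧ G * 𝔇 = H * B) ∧
    (IsUnit (1 + Y * E) ∧
      G * X * (1 + W * E * W * X)⁻¹ * W * 𝔇 * W * X =
        G * X * W * 𝔇 * W * (1 + X * W * E * W)⁻¹ * X ∧
      G * X * W * 𝔇 * W * (1 + X * W * E * W)⁻¹ * X = (1 + Y * E)⁻¹ * (Y * X)) ∧
    𝔇 * G * X * (1 + W * E * W * X)⁻¹ * W * 𝔇 * W * X = B * Y * X := by
  -- right-associated version of hX1
  have hX1r : X * (W * (B * (W * (B * W) ^ k))) = (B * W) ^ k := by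
    have h := hX1
    rw [pow_succ'] at h
    simpa only [Matrix.mul_assoc] using h
  -- index fact : rank ((B*W)^k) = rank ((B*W)^(k+1))
  have hne : Set.Nonempty {j : ℕ | ((B * W) ^ j).rank = ((B * W) ^ (j + 1)).rank} := by
    by_contra hc
    rw [Set.not_nonempty_iff_eq_empty] at hc
    have hlt : ∀ j : ℕ, ((B * W) ^ (j + 1)).rank < ((B * W) ^ j).rank := by
      intro j
      have hle : ((B * W) ^ (j + 1)).rank ≤ ((B * W) ^ j).rank := by
        rw [pow_succ]; exact Matrix.rank_mul_le_left _ _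
      rcases lt_or_eq_of_le hle with h | h
      · exact h
      · exact absurd (Set.eq_empty_iff_forall_notMem.mp hc j) (by simp [Set.mem_setOf_eq, h.symm])
    have key : ∀ j : ℕ, ((B * W) ^ j).rank + j ≤ ((B * W) ^ 0).rank := by
      intro j
      induction j with
      | zero => simp
      | succ p ih => have := hlt p; omega
    have := key (((B * W) ^ 0).rank + 1)
    omega
  have hkmem : ((B * W) ^ k).rank = ((B * W) ^ (k + 1)).rank := by
    have h : k ∈ {j : ℕ | ((B * W) ^ j).rank = ((B * W) ^ (j + 1)).rank} := by
      rw [hk]; exact Nat.sInf_mem hne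
    exact h
  -- factor (B*W)^k through (B*W)^(k+1)
  have hle1 : colSpace ((B * W) ^ (k + 1)) ≤ colSpace ((B * W) ^ k) := by
    rw [pow_succ]; exact col_mul_le _ _
  have hcol1 : colSpace ((B * W) ^ (k + 1)) = colSpace ((B * W) ^ k) :=
    Submodule.eq_of_le_of_finrank_eq hle1 (by
      rw [← rank_eq_finrank_col, ← rank_eq_finrank_col]; exact hkmem.symm)
  obtain ⟨D, hPD0⟩ := exists_factor hcol1.ge
  have hPD : (B * W) ^ k = B * (W * ((B * W) ^ k * D)) := by
    rw [pow_succ'] at hPD0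
    simpa only [Matrix.mul_assoc] using hPD0
  -- factor X through (B*W)^k
  have hle2 : colSpace ((B * W) ^ k) ≤ colSpace X := by
    rw [← hX1r]; exact col_mul_le _ _
  have hcol2 : colSpace ((B * W) ^ k) = colSpace X :=
    Submodule.eq_of_le_of_finrank_eq hle2 (by
      rw [← rank_eq_finrank_col, ← rank_eq_finrank_col]; exact hX2.symm)
  obtain ⟨C0, hC0⟩ := exists_factor hcol2.ge
  -- e1 : X * (W * (B*W)^k) = (B*W)^k * D
  have e1 : X * (W * (B * W) ^ k) = (B * W) ^ k * D := by
    conv_lhs => rw [hPD]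
    rw [show X * (W * (B * (W * ((B * W) ^ k * D)))) = (X * (W * (B * (W * (B * W) ^ k)))) * D by
      simp only [Matrix.mul_assoc], hX1r]
  -- h5 : B * W * X * W * (B*W)^k = (B*W)^k  (right-assoc)
  have h5 : B * (W * (X * (W * (B * W) ^ k))) = (B * W) ^ k := by
    rw [e1]
    exact hPD.symm
  -- h6 : X*W*B*W*X = X
  have h6 : X * (W * (B * (W * X))) = X := by
    nth_rewrite 2 [hC0]
    rw [show X * (W * (B * (W * ((B * W) ^ k * C0)))) = (X * (W * (B * (W * (B * W) ^ k)))) * C0 by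
      simp only [Matrix.mul_assoc], hX1r, ← hC0]
  -- h7 : B*W*X*W*X = X
  have h7 : B * (W * (X * (W * X))) = X := by
    nth_rewrite 2 [hC0]
    rw [show B * (W * (X * (W * ((B * W) ^ k * C0)))) = (B * (W * (X * (W * (B * W) ^ k)))) * C0 by
      simp only [Matrix.mul_assoc], h5, ← hC0]
  -- factorizations of E
  obtain ⟨C1, hC1⟩ := exists_factor hE1
  obtain ⟨C2, hC2⟩ := exists_factor hE2
  have hEP : E = (B * W) ^ k * (C2 * C1) := by
    rw [hC1, hC2, Matrix.mul_assoc]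
  -- hBHP : B * H * (B*W)^k = (B*W)^k
  have hBHP : B * (H * (B * W) ^ k) = (B * W) ^ k := by
    rcases Nat.eq_zero_or_pos k with hk0 | hkpos
    · subst hk0
      have h := hX1
      simp only [pow_one, pow_zero, Nat.zero_add] at h
      have h2 : (B * W) * (X * W) = 1 := by
        rw [← mul_eq_one_comm]
        simpa only [Matrix.mul_assoc] using h
      simp only [pow_zero, Matrix.mul_one]
      calc B * H = (B * H) * 1 := (Matrix.mul_one _).symm
        _ = (B * H) * ((B * W) * (X * W)) := by rw [h2]
        _ = (B * H * B) * (W * (X * W)) := by simp only [Matrix.mul_assoc]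
        _ = B * (W * (X * W)) := by rw [hH1]
        _ = (B * W) * (X * W) := by simp only [Matrix.mul_assoc]
        _ = 1 := h2
    · obtain ⟨j, hj⟩ := Nat.exists_eq_add_of_lt hkpos
      simp only [Nat.zero_add] at hj
      rw [hj, pow_succ']
      have hH1r : B * (H * B) = B := by rw [← Matrix.mul_assoc]; exact hH1
      rw [show B * (H * (B * W * (B * W) ^ j)) = (B * (H * B)) * (W * (B * W) ^ j) by
        simp only [Matrix.mul_assoc], hH1r]
      simp only [Matrix.mul_assoc]
  have hBHE : B * (H * E) = E := by
    rw [hEP]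
    rw [show B * (H * ((B * W) ^ k * (C2 * C1))) = (B * (H * (B * W) ^ k)) * (C2 * C1) by
      simp only [Matrix.mul_assoc], hBHP]
  have hBWXWE : B * (W * (X * (W * E))) = E := by
    rw [hEP]
    rw [show B * (W * (X * (W * ((B * W) ^ k * (C2 * C1))))) =
        (B * (W * (X * (W * (B * W) ^ k)))) * (C2 * C1) by
      simp only [Matrix.mul_assoc], h5]
  -- hEHB : E * (H * B) = E
  obtain ⟨C3, hC3⟩ := exists_factor hE3
  have hE' : E = C3ᴴ * B := by
    calc E = (Eᴴ)ᴴ := (conjTranspose_conjTranspose E).symm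
      _ = (Bᴴ * C3)ᴴ := by rw [hC3]
      _ = C3ᴴ * (Bᴴ)ᴴ := by rw [conjTranspose_mul]
      _ = C3ᴴ * B := by rw [conjTranspose_conjTranspose]
  have hEHB : E * (H * B) = E := by
    rw [hE']
    rw [show (C3ᴴ * B) * (H * B) = C3ᴴ * (B * H * B) by simp only [Matrix.mul_assoc], hH1]
  -- abbreviations
  set U : Matrix (Fin n) (Fin n) ℂ := 1 + H * E with hUdef
  set N : Matrix (Fin n) (Fin n) ℂ := 1 + W * E * W * X with hNdef
  set Sm : Matrix (Fin m) (Fin m) ℂ := 1 + X * W * E * W with hSmdef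
  have dU := (Matrix.isUnit_iff_isUnit_det U).mp hu1
  have dN := (Matrix.isUnit_iff_isUnit_det N).mp hu2
  have dS := (Matrix.isUnit_iff_isUnit_det Sm).mp hu3
  have hUmul : U * U⁻¹ = 1 := Matrix.mul_nonsing_inv U dU
  have hUinv : U⁻¹ * U = 1 := Matrix.nonsing_inv_mul U dU
  have hNmul : N * N⁻¹ = 1 := Matrix.mul_nonsing_inv N dN
  have hSmul : Sm * Sm⁻¹ = 1 := Matrix.mul_nonsing_inv Sm dS
  have hSinv : Sm⁻¹ * Sm = 1 := Matrix.nonsing_inv_mul Sm dS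
  -- part (a)
  have hBU : B * U = 𝔇 := by
    rw [hUdef, h𝔇, Matrix.mul_add, Matrix.mul_one, hBHE]
  have hDG : 𝔇 * G = B * H := by
    rw [hG, ← hBU]
    calc (B * U) * (U⁻¹ * H) = B * ((U * U⁻¹) * H) := by simp only [Matrix.mul_assoc]
      _ = B * H := by rw [hUmul, Matrix.one_mul]
  have hHD : H * 𝔇 = U * (H * B) := by
    rw [h𝔇, hUdef, Matrix.mul_add, Matrix.add_mul, Matrix.one_mul,
      Matrix.mul_assoc H E (H * B), hEHB]
  have hGD : G * 𝔇 = H * B := by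
    rw [hG]
    calc (U⁻¹ * H) * 𝔇 = U⁻¹ * (H * 𝔇) := by rw [Matrix.mul_assoc]
      _ = U⁻¹ * (U * (H * B)) := by rw [hHD]
      _ = (U⁻¹ * U) * (H * B) := by rw [← Matrix.mul_assoc]
      _ = H * B := by rw [hUinv, Matrix.one_mul]
  have hDGD : 𝔇 * G * 𝔇 = 𝔇 := by
    rw [hDG, h𝔇, Matrix.mul_add, hH1, Matrix.mul_assoc, hBHE]
  have hHBU : (H * B) * U = U * (H * B) := by
    rw [hUdef, Matrix.mul_add, Matrix.add_mul, Matrix.mul_one, Matrix.one_mul,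
      show (H * B) * (H * E) = H * (B * (H * E)) by simp only [Matrix.mul_assoc], hBHE,
      show (H * E) * (H * B) = H * (E * (H * B)) by simp only [Matrix.mul_assoc], hEHB]
  have hHBUinv : (H * B) * U⁻¹ = U⁻¹ * (H * B) := by
    calc (H * B) * U⁻¹ = (U⁻¹ * U) * ((H * B) * U⁻¹) := by rw [hUinv, Matrix.one_mul]
      _ = U⁻¹ * (((U * (H * B))) * U⁻¹) := by simp only [Matrix.mul_assoc]
      _ = U⁻¹ * (((H * B) * U) * U⁻¹) := by rw [hHBU]
      _ = U⁻¹ * ((H * B) * (U * U⁻¹)) := by simp only [Matrix.mul_assoc]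
      _ = U⁻¹ * (H * B) := by rw [hUmul, Matrix.mul_one]
  have hGDG : G * 𝔇 * G = G := by
    rw [hGD, hG]
    calc (H * B) * (U⁻¹ * H) = ((H * B) * U⁻¹) * H := by rw [← Matrix.mul_assoc]
      _ = (U⁻¹ * (H * B)) * H := by rw [hHBUinv]
      _ = U⁻¹ * (H * B * H) := by simp only [Matrix.mul_assoc]
      _ = U⁻¹ * H := by rw [hH2]
  -- part (b) preliminaries
  have hYE : Y * E = H * E := by
    rw [hY]
    calc H * B * W * X * W * E = H * (B * (W * (X * (W * E)))) := by simp only [Matrix.mul_assoc]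
      _ = H * E := by rw [hBWXWE]
  have hYX : Y * X = H * X := by
    rw [hY]
    calc H * B * W * X * W * X = H * (B * (W * (X * (W * X)))) := by simp only [Matrix.mul_assoc]
      _ = H * X := by rw [h7]
  have hXN : X * N = Sm * X := by
    rw [hNdef, hSmdef, Matrix.mul_add, Matrix.add_mul, Matrix.mul_one, Matrix.one_mul]
    simp only [Matrix.mul_assoc]
  have hXNinv : X * N⁻¹ = Sm⁻¹ * X := by
    calc X * N⁻¹ = (Sm⁻¹ * Sm) * (X * N⁻¹) := by rw [hSinv, Matrix.one_mul]
      _ = Sm⁻¹ * ((Sm * X) * N⁻¹) := by simp only [Matrix.mul_assoc]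
      _ = Sm⁻¹ * ((X * N) * N⁻¹) := by rw [← hXN]
      _ = Sm⁻¹ * (X * (N * N⁻¹)) := by simp only [Matrix.mul_assoc]
      _ = Sm⁻¹ * X := by rw [hNmul, Matrix.mul_one]
  have hZ : X * (W * (𝔇 * (W * X))) = Sm * X := by
    rw [h𝔇, hSmdef]
    simp only [Matrix.add_mul, Matrix.mul_add, Matrix.one_mul, Matrix.mul_assoc, h6]
  have hLHS : G * X * N⁻¹ * W * 𝔇 * W * X = G * X := by
    calc G * X * N⁻¹ * W * 𝔇 * W * X
        = G * ((X * N⁻¹) * (W * (𝔇 * (W * X)))) := by simp only [Matrix.mul_assoc]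
      _ = G * ((Sm⁻¹ * X) * (W * (𝔇 * (W * X)))) := by rw [hXNinv]
      _ = G * (Sm⁻¹ * (X * (W * (𝔇 * (W * X))))) := by simp only [Matrix.mul_assoc]
      _ = G * (Sm⁻¹ * (Sm * X)) := by rw [hZ]
      _ = G * ((Sm⁻¹ * Sm) * X) := by rw [← Matrix.mul_assoc Sm⁻¹ Sm X]
      _ = G * X := by rw [hSinv, Matrix.one_mul]
  have hMID : G * X * W * 𝔇 * W * Sm⁻¹ * X = G * X := by
    calc G * X * W * 𝔇 * W * Sm⁻¹ * X
        = G * ((X * (W * (𝔇 * W))) * (Sm⁻¹ * X)) := by simp only [Matrix.mul_assoc]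
      _ = G * ((X * (W * (𝔇 * W))) * (X * N⁻¹)) := by rw [← hXNinv]
      _ = G * ((X * (W * (𝔇 * (W * X)))) * N⁻¹) := by simp only [Matrix.mul_assoc]
      _ = G * ((Sm * X) * N⁻¹) := by rw [hZ]
      _ = G * ((X * N) * N⁻¹) := by rw [← hXN]
      _ = G * (X * (N * N⁻¹)) := by simp only [Matrix.mul_assoc]
      _ = G * X := by rw [hNmul, Matrix.mul_one]
  refine ⟨⟨hDGD, hGDG, ?_, ?_, hDG, hGD⟩, ⟨?_, ?_, ?_⟩, ?_⟩
  · rw [hDG]; exact hH3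
  · rw [hGD]; exact hH4
  · rw [hYE, ← hUdef]; exact hu1
  · rw [hLHS, hMID]
  · rw [hMID, hYE, hYX, ← hUdef, hG, Matrix.mul_assoc]
  · calc 𝔇 * G * X * N⁻¹ * W * 𝔇 * W * X
        = 𝔇 * (G * X * N⁻¹ * W * 𝔇 * W * X) := by simp only [Matrix.mul_assoc]
      _ = 𝔇 * (G * X) := by rw [hLHS]
      _ = (𝔇 * G) * X := by rw [← Matrix.mul_assoc]
      _ = (B * H) * X := by rw [hDG]
      _ = B * (H * X) := by rw [Matrix.mul_assoc]
      _ = B * (Y * X) := by rw [hYX]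
      _ = B * Y * X := by rw [← Matrix.mul_assoc]
end

section
/- Let A, B ∈ ℂ^{m×n} and W ∈ ℂ^{n×m} with (A·W)·(B·W) = (B·W)·(A·W), and let k be a natural number with k = max{ind(AW), ind(BW), ind(AWBW)}. Suppose Y₂ ∈ ℂ^{m×n} is a W-weighted weak Drazin inverse of B, i.e. Y₂·W·(B·W)^{k+1} = (B·W)^k, and Z₁ ∈ ℂ^{m×n} is a W-weighted weak Drazin inverse of A, i.e. Z₁·W·(A·W)^{k+1} = (A·W)^k. Then Y₂·W·Z₁ is a W-weighted weak Drazin inverse of A·W·B, i.e. (Y₂·W·Z₁)·W·(A·W·B·W)^{k+1} = (A·W·B·W)^k. -/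
open Matrix

/-- `Y` is a `W`-weighted weak Drazin inverse of `B` iff `IsWeakDrazinInv (Y * W) (B * W) k`. -/
def IsWeakDrazinInv {M : Type*} [Monoid M] (x a : M) (k : ℕ) : Prop :=
  x * a ^ (k + 1) = a ^ k

theorem IsWeakDrazinInv.mul_of_commute {M : Type*} [Monoid M] {a b y z : M} {k : ℕ}
    (hab : Commute a b) (hy : IsWeakDrazinInv y b k) (hz : IsWeakDrazinInv z a k) :
    IsWeakDrazinInv (y * z) (a * b) k := by
  unfold IsWeakDrazinInv at *
  calc y * z * (a * b) ^ (k + 1)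
      = y * (z * a ^ (k + 1)) * b ^ (k + 1) := by rw [hab.mul_pow]; simp only [mul_assoc]
    _ = y * b ^ (k + 1) * a ^ k := by rw [hz, mul_assoc, (hab.pow_pow _ _).eq, ← mul_assoc]
    _ = (a * b) ^ k := by rw [hy, hab.mul_pow, (hab.pow_pow _ _).eq]

theorem weighted_weak_Drazin_reverse_order_general {m n : ℕ}
    (A B : Matrix (Fin m) (Fin n) ℂ) (W : Matrix (Fin n) (Fin m) ℂ)
    (hcomm : (A * W) * (B * W) = (B * W) * (A * W))
    (k : ℕ)
    (Y₂ : Matrix (Fin m) (Fin n) ℂ)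
    (hY₂ : Y₂ * W * (B * W) ^ (k + 1) = (B * W) ^ k)
    (Z₁ : Matrix (Fin m) (Fin n) ℂ)
    (hZ₁ : Z₁ * W * (A * W) ^ (k + 1) = (A * W) ^ k) :
    (Y₂ * W * Z₁) * W * (A * W * B * W) ^ (k + 1) = (A * W * B * W) ^ k := by
  have h : IsWeakDrazinInv (Y₂ * W * (Z₁ * W)) (A * W * (B * W)) k :=
    IsWeakDrazinInv.mul_of_commute hcomm hY₂ hZ₁
  simpa only [IsWeakDrazinInv, Matrix.mul_assoc] using h

/-- **Theorem 3.25.** Reverse order law for the W-weighted weak Drazin inverse: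
`Y₂·W·Z₁` is a W-weighted weak Drazin inverse of `A·W·B`. -/
theorem weighted_weak_Drazin_reverse_order {m n : ℕ}
    (A B : Matrix (Fin m) (Fin n) ℂ) (W : Matrix (Fin n) (Fin m) ℂ)
    (hcomm : (A * W) * (B * W) = (B * W) * (A * W))
    (k : ℕ)
    (hk : k = max (max (matIndex (A * W)) (matIndex (B * W))) (matIndex (A * W * B * W)))
    (Y₂ : Matrix (Fin m) (Fin n) ℂ)
    (hY₂ : Y₂ * W * (B * W) ^ (k + 1) = (B * W) ^ k)
    (Z₁ : Matrix (Fin m) (Fin n) ℂ)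
    (hZ₁ : Z₁ * W * (A * W) ^ (k + 1) = (A * W) ^ k) :
    (Y₂ * W * Z₁) * W * (A * W * B * W) ^ (k + 1) = (A * W * B * W) ^ k :=
  weighted_weak_Drazin_reverse_order_general A B W hcomm k Y₂ hY₂ Z₁ hZ₁
end

section
/- Let A, B ∈ ℂ^{m×n} and W ∈ ℂ^{n×m} with (A·W)·(B·W) = (B·W)·(A·W), and let k be a natural number with k = max{ind(AW), ind(BW), ind(AWBW)}. Suppose Y₃ ∈ ℂ^{m×n} is a minimal rank W-weighted weak Drazin inverse of B (so Y₃·W·(B·W)^{k+1} = (B·W)^k and rank(Y₃) = rank((B·W)^k)), Z₂ ∈ ℂ^{m×n} is a minimal rank W-weighted weak Drazin inverse of A (so Z₂·W·(A·W)^{k+1} = (A·W)^k and rank(Z₂) = rank((A·W)^k)), and (Y₃·W)·(A·W) = (A·W)·(Y₃·W). Then Y₃·W·Z₂ is a minimal rank W-weighted weak Drazin inverse of A·W·B, i.e. (Y₃·W·Z₂)·W·(A·W·B·W)^{k+1} = (A·W·B·W)^k and rank(Y₃·W·Z₂) = rank((A·W·B·W)^k). -/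
/-!
Commutativity of `AW` and `BW` gives `(AWBW)^j = (AW)^j (BW)^j`, so the defining equation for
`Y₃WZ₂` follows by absorbing `Z₂W` into `(AW)^{k+1}` and then `Y₃W` into `(BW)^{k+1}`.
For the rank: `(BW)^k = Y₃ · W(BW)^{k+1}` and `rank Y₃ = rank (BW)^k` force the column spaces of
`Y₃` and `(BW)^k` to coincide, so `Y₃ = (BW)^k V`, and likewise `Z₂ = (AW)^k U`. Then
`Y₃WZ₂ = (AWBW)^k · VWU` and `(AWBW)^k = Y₃WZ₂ · W(AWBW)^{k+1}`, so each matrix factors through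
the other and the ranks agree.
-/

open Matrix

variable {m n p : Type*} [Fintype n] [Fintype p]

theorem Matrix.exists_eq_mul_of_range_le {R : Type*} [CommSemiring R] [DecidableEq n]
    {P : Matrix m p R} {Z : Matrix m n R}
    (h : LinearMap.range Z.mulVecLin ≤ LinearMap.range P.mulVecLin) :
    ∃ U : Matrix p n R, Z = P * U := by
  have hcol (j : n) : ∃ u, P *ᵥ u = Z.col j := by
    simpa only [LinearMap.mem_range, mulVecLin_apply, mulVec_single_one] using
      h ⟨Pi.single j 1, rfl⟩
  choose u hu using hcol
  exact ⟨(of u)ᵀ, ext fun i j => (congrFun (hu j) i).symm⟩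

variable {K : Type*} [Field K]

theorem Matrix.exists_eq_mul_of_eq_mul_of_rank_le [Fintype m] [DecidableEq n]
    {P : Matrix m p K} {Z : Matrix m n K} {C : Matrix n p K}
    (hP : P = Z * C) (hrank : Z.rank ≤ P.rank) : ∃ U : Matrix p n K, Z = P * U := by
  refine exists_eq_mul_of_range_le (ge_of_eq ?_)
  refine Submodule.eq_of_le_of_finrank_le ?_ hrank
  rw [hP, mulVecLin_mul]
  exact LinearMap.range_comp_le_range _ _

theorem Matrix.rank_eq_of_eq_mul_of_eq_mul {R : Type*} [CommRing R] [StrongRankCondition R]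
    {P : Matrix m p R} {Z : Matrix m n R} {C : Matrix n p R} {U : Matrix p n R}
    (hP : P = Z * C) (hZ : Z = P * U) : Z.rank = P.rank :=
  le_antisymm (hZ ▸ rank_mul_le_left _ _) (hP ▸ rank_mul_le_left _ _)

theorem mul_mul_pow_succ_eq_pow_of_commute {M : Type*} [Monoid M] {a b y z : M} {k : ℕ}
    (hab : Commute a b) (hya : Commute y a)
    (hz : z * a ^ (k + 1) = a ^ k) (hy : y * b ^ (k + 1) = b ^ k) :
    y * z * (a * b) ^ (k + 1) = (a * b) ^ k :=
  calc y * z * (a * b) ^ (k + 1) = y * (z * a ^ (k + 1)) * b ^ (k + 1) := by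
        rw [hab.mul_pow]; simp only [mul_assoc]
    _ = a ^ k * (y * b ^ (k + 1)) := by rw [hz, (hya.pow_right k).eq, mul_assoc]
    _ = (a * b) ^ k := by rw [hy, hab.mul_pow]

def IsMinRankWeightedWeakDrazinInv [Fintype m] [DecidableEq m] (k : ℕ) (B : Matrix m n K)
    (W : Matrix n m K) (X : Matrix m n K) : Prop :=
  X * W * (B * W) ^ (k + 1) = (B * W) ^ k ∧ X.rank = ((B * W) ^ k).rank

namespace IsMinRankWeightedWeakDrazinInv

variable [Fintype m] [DecidableEq m] [DecidableEq n] {k : ℕ} {A B : Matrix m n K}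
  {W : Matrix n m K} {X Y Z : Matrix m n K}

theorem exists_eq_pow_mul (hX : IsMinRankWeightedWeakDrazinInv k B W X) :
    ∃ U : Matrix m n K, X = (B * W) ^ k * U :=
  exists_eq_mul_of_eq_mul_of_rank_le (by rw [← hX.1, Matrix.mul_assoc]) hX.2.le

theorem reverse_order (hAB : Commute (A * W) (B * W)) (hYA : Commute (Y * W) (A * W))
    (hY : IsMinRankWeightedWeakDrazinInv k B W Y) (hZ : IsMinRankWeightedWeakDrazinInv k A W Z) :
    IsMinRankWeightedWeakDrazinInv k (A * W * B) W (Y * W * Z) := by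
  have hpow (j : ℕ) : (A * W * B * W) ^ j = (A * W) ^ j * (B * W) ^ j := by
    rw [Matrix.mul_assoc, hAB.mul_pow]
  have hinv : Y * W * Z * W * (A * W * B * W) ^ (k + 1) = (A * W * B * W) ^ k := by
    simpa only [Matrix.mul_assoc] using
      mul_mul_pow_succ_eq_pow_of_commute hAB hYA hZ.1 hY.1
  obtain ⟨U, hU⟩ := hZ.exists_eq_pow_mul
  obtain ⟨V, hV⟩ := hY.exists_eq_pow_mul
  have hpow_factor : (A * W * B * W) ^ k = Y * W * Z * (W * (A * W * B * W) ^ (k + 1)) := by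
    rw [← hinv, Matrix.mul_assoc]
  have hprod_factor : Y * W * Z = (A * W * B * W) ^ k * (V * W * U) :=
    calc Y * W * Z = (A * W) ^ k * (Y * W) * U := by
          rw [hU, ← (hYA.pow_right k).eq]; simp only [Matrix.mul_assoc]
      _ = (A * W * B * W) ^ k * (V * W * U) := by
          rw [hpow, hV]; simp only [Matrix.mul_assoc]
  exact ⟨hinv, rank_eq_of_eq_mul_of_eq_mul hpow_factor hprod_factor⟩

end IsMinRankWeightedWeakDrazinInv

theorem minimal_rank_weighted_weak_Drazin_reverse_order_general {m n : ℕ}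
    (A B : Matrix (Fin m) (Fin n) ℂ) (W : Matrix (Fin n) (Fin m) ℂ)
    (hcomm : (A * W) * (B * W) = (B * W) * (A * W))
    (k : ℕ)
    (Y₃ : Matrix (Fin m) (Fin n) ℂ)
    (hY₃1 : Y₃ * W * (B * W) ^ (k + 1) = (B * W) ^ k)
    (hY₃2 : Y₃.rank = ((B * W) ^ k).rank)
    (Z₂ : Matrix (Fin m) (Fin n) ℂ)
    (hZ₂1 : Z₂ * W * (A * W) ^ (k + 1) = (A * W) ^ k)
    (hZ₂2 : Z₂.rank = ((A * W) ^ k).rank)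
    (hYA : (Y₃ * W) * (A * W) = (A * W) * (Y₃ * W)) :
    (Y₃ * W * Z₂) * W * (A * W * B * W) ^ (k + 1) = (A * W * B * W) ^ k ∧
    (Y₃ * W * Z₂).rank = ((A * W * B * W) ^ k).rank :=
  IsMinRankWeightedWeakDrazinInv.reverse_order hcomm hYA ⟨hY₃1, hY₃2⟩ ⟨hZ₂1, hZ₂2⟩

/-- **Theorem 3.27.** Reverse order law for the minimal rank W-weighted weak Drazin inverse:
`Y₃·W·Z₂` is a minimal rank W-weighted weak Drazin inverse of `A·W·B`. -/
theorem minimal_rank_weighted_weak_Drazin_reverse_order {m n : ℕ}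
    (A B : Matrix (Fin m) (Fin n) ℂ) (W : Matrix (Fin n) (Fin m) ℂ)
    (hcomm : (A * W) * (B * W) = (B * W) * (A * W))
    (k : ℕ)
    (hk : k = max (max (matIndex (A * W)) (matIndex (B * W))) (matIndex (A * W * B * W)))
    (Y₃ : Matrix (Fin m) (Fin n) ℂ)
    (hY₃1 : Y₃ * W * (B * W) ^ (k + 1) = (B * W) ^ k)
    (hY₃2 : Y₃.rank = ((B * W) ^ k).rank)
    (Z₂ : Matrix (Fin m) (Fin n) ℂ)
    (hZ₂1 : Z₂ * W * (A * W) ^ (k + 1) = (A * W) ^ k)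
    (hZ₂2 : Z₂.rank = ((A * W) ^ k).rank)
    (hYA : (Y₃ * W) * (A * W) = (A * W) * (Y₃ * W)) :
    (Y₃ * W * Z₂) * W * (A * W * B * W) ^ (k + 1) = (A * W * B * W) ^ k ∧
    (Y₃ * W * Z₂).rank = ((A * W * B * W) ^ k).rank :=
  minimal_rank_weighted_weak_Drazin_reverse_order_general A B W hcomm k Y₃ hY₃1 hY₃2 Z₂ hZ₂1 hZ₂2
    hYA
end
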